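/- arXiv:2109.11327 — 5 statements merged into one kernel-verified Lean document; each statement's English description precedes it below -/
import Mathlib

section
/- Let δ ∈ (−1,1) with δ ≠ 0, and let a : (0,∞) → ℂ be a smooth function such that for every integer k ≥ 0 there is a constant C_k with |a^{(k)}(r)| ≤ C_k (1+r)^{−1/2−k} for all r > 0. Then there exists a constant C > 0, depending only on finitely many of the constants C_k (and independent of δ and r), such that for every r > 0 and for either choice of sign ±: |∫_0^∞ λ/(λ² + √(1−δ²) − iδ) · a(λ r) e^{±iλ r} dλ| ≤ C |log r| if 0 < r < 3/4, and ≤ C r^{−1} if r ≥ 3/4. -/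
open MeasureTheory Real Set
open scoped ENNReal

section AuxStatement0
open Complex Filter

open MeasureTheory Real Set Complex Filter

lemma normw_sq (s δ l : ℝ) :
    ‖(l:ℂ)^2 + ((s:ℂ) - Complex.I * (δ:ℂ))‖^2 = (l^2+s)^2 + δ^2 := by
  have h1 : ((l:ℂ)^2 + ((s:ℂ) - Complex.I * (δ:ℂ))).re = l^2 + s := by
    simp [← Complex.ofReal_pow]
  have h2 : ((l:ℂ)^2 + ((s:ℂ) - Complex.I * (δ:ℂ))).im = -δ := by
    simp [← Complex.ofReal_pow]
  rw [Complex.sq_norm, Complex.normSq_apply, h1, h2]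
  ring

set_option maxHeartbeats 1000000 in
lemma core (a : ℝ → ℂ) (C0 C1 : ℝ) (hC0 : 0 ≤ C0) (hC1 : 0 ≤ C1)
    (hdiff : ∀ x : ℝ, 0 < x → HasDerivAt a (deriv a x) x)
    (hcont1 : ContinuousOn (deriv a) (Set.Ioi 0))
    (h0 : ∀ x : ℝ, 0 < x → ‖a x‖ ≤ C0 * (1+x) ^ (-(1/2):ℝ))
    (h1 : ∀ x : ℝ, 0 < x → ‖deriv a x‖ ≤ C1 * (1+x) ^ (-(3/2):ℝ))
    (z : ℂ) (hz : ‖z‖ = 1)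
    (hz1 : ∀ l : ℝ, 0 ≤ l → 1 ≤ ‖(l:ℂ)^2 + z‖)
    (hz2 : ∀ l : ℝ, 0 ≤ l → l^2 ≤ ‖(l:ℂ)^2 + z‖)
    (r : ℝ) (hr : 0 < r) (ε : ℝ) (hε : ε = 1 ∨ ε = -1) :
    ‖∫ l in Set.Ioi (0:ℝ), (l:ℂ)/((l:ℂ)^2 + z) * a (l*r) *
        Complex.exp ((ε:ℂ) * Complex.I * (r:ℂ) * (l:ℂ))‖ ≤
      if r < 3/4 then (20*(C0+C1+1)) * |Real.log r| else (20*(C0+C1+1)) * r⁻¹ := by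
  set c : ℂ := (ε:ℂ) * Complex.I * (r:ℂ) with hc_def
  set F : ℝ → ℂ := fun l => (l:ℂ)/((l:ℂ)^2 + z) * a (l*r) with hF_def
  set e : ℝ → ℂ := fun l => Complex.exp (c * (l:ℂ)) with he_def
  have hεn : |ε| = 1 := by rcases hε with h | h <;> simp [h]
  -- denominator nonzero
  have hne : ∀ l : ℝ, 0 ≤ l → (l:ℂ)^2 + z ≠ 0 := by
    intro l hl h
    have := hz1 l hl
    rw [h] at this; simp at this; linarith
  have hnorme : ∀ l : ℝ, ‖e l‖ = 1 := by
    intro l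
    rw [he_def]
    simp only [hc_def]
    rw [Complex.norm_exp]
    norm_num [Complex.mul_re, Complex.mul_im]
  -- basic norm bounds on the rational factor
  have hqa : ∀ l : ℝ, 0 ≤ l → ‖(l:ℂ)/((l:ℂ)^2 + z)‖ ≤ l := by
    intro l hl
    rw [norm_div, Complex.norm_real, Real.norm_eq_abs, _root_.abs_of_nonneg hl]
    exact div_le_self hl (hz1 l hl)
  have hqb : ∀ l : ℝ, 0 < l → ‖(l:ℂ)/((l:ℂ)^2 + z)‖ ≤ l⁻¹ := by
    intro l hl
    rw [norm_div, Complex.norm_real, Real.norm_eq_abs, _root_.abs_of_nonneg hl.le]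
    calc l / ‖(l:ℂ)^2 + z‖ ≤ l / l^2 :=
          div_le_div_of_nonneg_left hl.le (by positivity) (hz2 l hl.le)
      _ = l⁻¹ := by field_simp [pow_two]
  have hqc : ∀ l : ℝ, 0 ≤ l → ‖(l:ℂ)/((l:ℂ)^2 + z)‖ ≤ 1 := by
    intro l hl
    rcases le_or_gt l 1 with h | h
    · exact (hqa l hl).trans h
    · exact (hqb l (by linarith)).trans (by
        rw [inv_le_one_iff₀]; right; linarith)
  have hrpow1 : ∀ x : ℝ, 0 ≤ x → ∀ p : ℝ, p ≤ 0 → (1+x) ^ p ≤ 1 := fun x hx p hp =>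
    Real.rpow_le_one_of_one_le_of_nonpos (by linarith) hp
  -- pointwise bound on a
  have ha0 : ∀ l : ℝ, 0 < l → ‖a (l*r)‖ ≤ C0 * (1+l*r) ^ (-(1/2):ℝ) :=
    fun l hl => h0 _ (mul_pos hl hr)
  -- continuity of the integrand on Ioi 0
  have cfrac : ContinuousOn (fun l : ℝ => (l:ℂ)/((l:ℂ)^2 + z)) (Set.Ioi 0) := by
    intro l hl
    exact (ContinuousAt.div (Complex.continuous_ofReal.continuousAt)
      (((Complex.continuous_ofReal.pow 2).add continuous_const).continuousAt)
      (hne l (le_of_lt hl))).continuousWithinAt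
  have ca : ContinuousOn (fun l : ℝ => a (l*r)) (Set.Ioi 0) := by
    intro l hl
    have h1 : ContinuousAt (fun l : ℝ => l * r) l :=
      (continuous_id.mul continuous_const).continuousAt
    have h2 : ContinuousAt (fun l : ℝ => a (l*r)) l :=
      ContinuousAt.comp (hdiff (l*r) (mul_pos hl hr)).continuousAt h1
    exact h2.continuousWithinAt
  have ce : Continuous e := Complex.continuous_exp.comp (continuous_const.mul Complex.continuous_ofReal)
  have measFe : ContinuousOn (fun l => F l * e l) (Set.Ioi 0) :=
    (cfrac.mul ca).mul ce.continuousOn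
  -- two useful rpow facts
  have bound3 : ∀ l : ℝ, 0 < l → l⁻¹ * (1+l*r) ^ (-(1/2):ℝ) ≤
      r ^ (-(1/2):ℝ) * l ^ (-(3/2):ℝ) := by
    intro l hl
    have h1 : ((1:ℝ)+l*r) ^ (-(1/2):ℝ) ≤ (l*r) ^ (-(1/2):ℝ) :=
      Real.rpow_le_rpow_of_nonpos (mul_pos hl hr) (by linarith) (by norm_num)
    have h2 : ((l*r):ℝ) ^ (-(1/2):ℝ) = l ^ (-(1/2):ℝ) * r ^ (-(1/2):ℝ) :=
      Real.mul_rpow hl.le hr.le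
    have h3 : l⁻¹ * l ^ (-(1/2):ℝ) = l ^ (-(3/2):ℝ) := by
      rw [← Real.rpow_neg_one l, ← Real.rpow_add hl]
      norm_num
    calc l⁻¹ * (1+l*r) ^ (-(1/2):ℝ) ≤ l⁻¹ * ((l*r) ^ (-(1/2):ℝ)) := by
          apply mul_le_mul_of_nonneg_left h1 (by positivity)
      _ = r ^ (-(1/2):ℝ) * (l⁻¹ * l ^ (-(1/2):ℝ)) := by rw [h2]; ring
      _ = r ^ (-(1/2):ℝ) * l ^ (-(3/2):ℝ) := by rw [h3]
  -- pointwise bounds on the full integrand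
  have hFe_le : ∀ l : ℝ, 0 < l → ‖F l * e l‖ ≤
      ‖(l:ℂ)/((l:ℂ)^2 + z)‖ * (C0 * (1+l*r) ^ (-(1/2):ℝ)) := by
    intro l hl
    rw [norm_mul, norm_mul, hnorme l, mul_one]
    exact mul_le_mul_of_nonneg_left (ha0 l hl) (norm_nonneg _)
  -- integrability of the integrand
  have intFe : IntegrableOn (fun l => F l * e l) (Set.Ioi 0) := by
    rw [← Set.Ioc_union_Ioi_eq_Ioi (zero_le_one (α := ℝ))]
    have intc : IntegrableOn (fun _ : ℝ => C0) (Set.Ioc (0:ℝ) 1) volume :=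
      integrableOn_const measure_Ioc_lt_top.ne
    have intr : IntegrableOn (fun l : ℝ => C0 * r ^ (-(1/2):ℝ) * l ^ (-(3/2):ℝ)) (Set.Ioi (1:ℝ)) volume := by
      have := (integrableOn_Ioi_rpow_of_lt (show (-(3/2):ℝ) < -1 by norm_num) one_pos)
      simpa [mul_assoc, IntegrableOn] using this.const_mul (C0 * r ^ (-(1/2):ℝ))
    apply MeasureTheory.IntegrableOn.union
    · apply Integrable.mono' intc
      · exact (measFe.mono Set.Ioc_subset_Ioi_self).aestronglyMeasurable measurableSet_Ioc
      · filter_upwards [ae_restrict_mem measurableSet_Ioc] with l hl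
        calc ‖F l * e l‖ ≤ ‖(l:ℂ)/((l:ℂ)^2 + z)‖ * (C0 * (1+l*r) ^ (-(1/2):ℝ)) :=
              hFe_le l hl.1
          _ ≤ 1 * (C0 * 1) := by
              apply mul_le_mul (hqc l hl.1.le) ?_ (mul_nonneg hC0 (Real.rpow_nonneg (by nlinarith [mul_pos hl.1 hr]) _)) zero_le_one
              exact mul_le_mul_of_nonneg_left
                (hrpow1 (l*r) (mul_nonneg hl.1.le hr.le) _ (by norm_num)) hC0
          _ = C0 := by ring
    · apply Integrable.mono' intr
      · exact (measFe.mono (Set.Ioi_subset_Ioi zero_le_one)).aestronglyMeasurable measurableSet_Ioi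
      · filter_upwards [ae_restrict_mem measurableSet_Ioi] with l hl
        have hl0 : (0:ℝ) < l := lt_trans one_pos hl
        calc ‖F l * e l‖ ≤ ‖(l:ℂ)/((l:ℂ)^2 + z)‖ * (C0 * (1+l*r) ^ (-(1/2):ℝ)) :=
              hFe_le l hl0
          _ ≤ l⁻¹ * (C0 * (1+l*r) ^ (-(1/2):ℝ)) := by
              apply mul_le_mul_of_nonneg_right (hqb l hl0) (by positivity)
          _ = C0 * (l⁻¹ * (1+l*r) ^ (-(1/2):ℝ)) := by ring
          _ ≤ C0 * (r ^ (-(1/2):ℝ) * l ^ (-(3/2):ℝ)) :=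
              mul_le_mul_of_nonneg_left (bound3 l hl0) hC0
          _ = C0 * r ^ (-(1/2):ℝ) * l ^ (-(3/2):ℝ) := by ring
  have normN : ‖∫ l in Set.Ioi (0:ℝ), F l * e l‖ ≤ ∫ l in Set.Ioi (0:ℝ), ‖F l * e l‖ :=
    MeasureTheory.norm_integral_le_integral_norm _
  have intN : IntegrableOn (fun l => ‖F l * e l‖) (Set.Ioi (0:ℝ)) := intFe.norm
  rcases lt_or_ge r (3/4) with hcase | hcase
  · -- small r : direct estimate with logarithmic splitting
    rw [if_pos hcase]
    have hr1 : r < 1 := by linarith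
    have hrinv : (1:ℝ) ≤ r⁻¹ := by
      nlinarith [inv_pos.2 hr, mul_inv_cancel₀ (ne_of_gt hr)]
    have hlog : Real.log r < 0 := Real.log_neg hr hr1
    have habs : |Real.log r| = - Real.log r := abs_of_neg hlog
    have hL : 1/4 ≤ |Real.log r| := by
      have := Real.log_le_sub_one_of_pos hr
      rw [habs]; linarith
    -- split the integral
    have hsplit1 : (∫ l in Set.Ioi (0:ℝ), ‖F l * e l‖) =
        (∫ l in Set.Ioc (0:ℝ) 1, ‖F l * e l‖) + ∫ l in Set.Ioi (1:ℝ), ‖F l * e l‖ := by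
      rw [← MeasureTheory.setIntegral_union (Set.Ioc_disjoint_Ioi le_rfl) measurableSet_Ioi
        (intN.mono_set Set.Ioc_subset_Ioi_self)
        (intN.mono_set (Set.Ioi_subset_Ioi zero_le_one)),
        Set.Ioc_union_Ioi_eq_Ioi zero_le_one]
    have hsplit2 : (∫ l in Set.Ioi (1:ℝ), ‖F l * e l‖) =
        (∫ l in Set.Ioc (1:ℝ) r⁻¹, ‖F l * e l‖) + ∫ l in Set.Ioi r⁻¹, ‖F l * e l‖ := by
      rw [← MeasureTheory.setIntegral_union (Set.Ioc_disjoint_Ioi le_rfl) measurableSet_Ioi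
        (intN.mono_set (Set.Ioc_subset_Ioi_self.trans (Set.Ioi_subset_Ioi zero_le_one)))
        (intN.mono_set (Set.Ioi_subset_Ioi (by linarith : (0:ℝ) ≤ r⁻¹))),
        Set.Ioc_union_Ioi_eq_Ioi hrinv]
    -- piece 1
    have b1 : (∫ l in Set.Ioc (0:ℝ) 1, ‖F l * e l‖) ≤ C0 * (1/2) := by
      have hval : (∫ l in Set.Ioc (0:ℝ) 1, C0 * l) = C0 * (1/2) := by
        rw [← intervalIntegral.integral_of_le zero_le_one,
          intervalIntegral.integral_const_mul, integral_id]
        norm_num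
      rw [← hval]
      apply MeasureTheory.setIntegral_mono_on
        (intN.mono_set Set.Ioc_subset_Ioi_self)
        ((continuous_const.mul continuous_id).integrableOn_Ioc) measurableSet_Ioc
      intro l hl
      calc ‖F l * e l‖ ≤ ‖(l:ℂ)/((l:ℂ)^2 + z)‖ * (C0 * (1+l*r) ^ (-(1/2):ℝ)) :=
            hFe_le l hl.1
        _ ≤ l * (C0 * 1) := by
            apply mul_le_mul (hqa l hl.1.le) ?_
              (mul_nonneg hC0 (Real.rpow_nonneg (by nlinarith [mul_pos hl.1 hr]) _)) hl.1.le
            exact mul_le_mul_of_nonneg_left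
              (hrpow1 (l*r) (mul_nonneg hl.1.le hr.le) _ (by norm_num)) hC0
        _ = C0 * l := by ring
    -- piece 2
    have b2 : (∫ l in Set.Ioc (1:ℝ) r⁻¹, ‖F l * e l‖) ≤ C0 * |Real.log r| := by
      have hint : IntegrableOn (fun l : ℝ => C0 * l⁻¹) (Set.Ioc (1:ℝ) r⁻¹) := by
        have : IntervalIntegrable (fun l : ℝ => l⁻¹) volume 1 r⁻¹ := by
          apply intervalIntegral.intervalIntegrable_inv
          · intro x hx
            rcases hx with ⟨h1, _⟩
            have hmin : (0:ℝ) < min 1 r⁻¹ := lt_min one_pos (by linarith)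
            have : (0:ℝ) < x := lt_of_lt_of_le hmin h1
            exact ne_of_gt this
          · exact continuousOn_id
        exact ((intervalIntegrable_iff_integrableOn_Ioc_of_le hrinv).1 this).const_mul C0
      have hval : (∫ l in Set.Ioc (1:ℝ) r⁻¹, C0 * l⁻¹) = C0 * |Real.log r| := by
        rw [← intervalIntegral.integral_of_le hrinv, intervalIntegral.integral_const_mul,
          integral_inv (by
            intro h
            rcases h with ⟨h1, _⟩
            have : (0:ℝ) < min 1 r⁻¹ := lt_min one_pos (by linarith)
            linarith)]
        rw [habs, div_one, Real.log_inv]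
      rw [← hval]
      apply MeasureTheory.setIntegral_mono_on
        (intN.mono_set (Set.Ioc_subset_Ioi_self.trans (Set.Ioi_subset_Ioi zero_le_one)))
        hint measurableSet_Ioc
      intro l hl
      have hl0 : (0:ℝ) < l := lt_of_lt_of_le one_pos hl.1.le
      calc ‖F l * e l‖ ≤ ‖(l:ℂ)/((l:ℂ)^2 + z)‖ * (C0 * (1+l*r) ^ (-(1/2):ℝ)) :=
            hFe_le l hl0
        _ ≤ l⁻¹ * (C0 * 1) := by
            apply mul_le_mul (hqb l hl0) ?_
              (mul_nonneg hC0 (Real.rpow_nonneg (by nlinarith [mul_pos hl0 hr]) _))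
              (by positivity)
            exact mul_le_mul_of_nonneg_left
              (hrpow1 (l*r) (mul_nonneg hl0.le hr.le) _ (by norm_num)) hC0
        _ = C0 * l⁻¹ := by ring
    -- piece 3
    have b3 : (∫ l in Set.Ioi r⁻¹, ‖F l * e l‖) ≤ 2 * C0 := by
      have hrinv0 : (0:ℝ) < r⁻¹ := by linarith
      have hint : IntegrableOn (fun l : ℝ => C0 * r ^ (-(1/2):ℝ) * l ^ (-(3/2):ℝ))
          (Set.Ioi r⁻¹) := by
        have := (integrableOn_Ioi_rpow_of_lt (show (-(3/2):ℝ) < -1 by norm_num) hrinv0)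
        simpa [mul_assoc, IntegrableOn] using this.const_mul (C0 * r ^ (-(1/2):ℝ))
      have hval : (∫ l in Set.Ioi r⁻¹, C0 * r ^ (-(1/2):ℝ) * l ^ (-(3/2):ℝ)) = 2 * C0 := by
        rw [MeasureTheory.integral_const_mul, integral_Ioi_rpow_of_lt (by norm_num) hrinv0]
        have h1 : (r⁻¹) ^ ((-(3/2):ℝ) + 1) = r ^ ((1/2):ℝ) := by
          rw [← Real.rpow_neg_one r, ← Real.rpow_mul hr.le]
          norm_num
        rw [h1]
        have h2 : r ^ (-(1/2):ℝ) * r ^ ((1/2):ℝ) = 1 := by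
          rw [← Real.rpow_add hr]; norm_num
        field_simp
        nlinarith [h2]
      rw [← hval]
      apply MeasureTheory.setIntegral_mono_on
        (intN.mono_set (Set.Ioi_subset_Ioi hrinv0.le)) hint measurableSet_Ioi
      intro l hl
      have hl0 : (0:ℝ) < l := lt_trans hrinv0 hl
      calc ‖F l * e l‖ ≤ ‖(l:ℂ)/((l:ℂ)^2 + z)‖ * (C0 * (1+l*r) ^ (-(1/2):ℝ)) :=
            hFe_le l hl0
        _ ≤ l⁻¹ * (C0 * (1+l*r) ^ (-(1/2):ℝ)) :=
            mul_le_mul_of_nonneg_right (hqb l hl0)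
              (mul_nonneg hC0 (Real.rpow_nonneg (by nlinarith [mul_pos hl0 hr]) _))
        _ = C0 * (l⁻¹ * (1+l*r) ^ (-(1/2):ℝ)) := by ring
        _ ≤ C0 * (r ^ (-(1/2):ℝ) * l ^ (-(3/2):ℝ)) :=
            mul_le_mul_of_nonneg_left (bound3 l hl0) hC0
        _ = C0 * r ^ (-(1/2):ℝ) * l ^ (-(3/2):ℝ) := by ring
    calc ‖∫ l in Set.Ioi (0:ℝ), F l * e l‖ ≤ ∫ l in Set.Ioi (0:ℝ), ‖F l * e l‖ := normN
      _ = (∫ l in Set.Ioc (0:ℝ) 1, ‖F l * e l‖) + ((∫ l in Set.Ioc (1:ℝ) r⁻¹, ‖F l * e l‖)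
            + ∫ l in Set.Ioi r⁻¹, ‖F l * e l‖) := by rw [hsplit1, hsplit2]
      _ ≤ C0 * (1/2) + (C0 * |Real.log r| + 2 * C0) := by
            exact add_le_add b1 (add_le_add b2 b3)
      _ ≤ 20*(C0+C1+1) * |Real.log r| := by nlinarith [hL, abs_nonneg (Real.log r)]
  · -- large r : integration by parts
    rw [if_neg (not_lt.2 hcase)]
    have hεc : ((ε:ℝ):ℂ) ≠ 0 := by
      rcases hε with h | h <;> simp [h]
    have hc0 : c ≠ 0 := by
      rw [hc_def]
      exact mul_ne_zero (mul_ne_zero hεc Complex.I_ne_zero)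
        (by exact_mod_cast ne_of_gt hr)
    have hnormc : ‖c‖ = r := by
      rw [hc_def]
      simp [norm_mul, Complex.norm_real, hεn, abs_of_pos hr]
    -- derivative of the rational factor
    set q : ℝ → ℂ := fun l => (z - (l:ℂ)^2)/(((l:ℂ)^2 + z)^2) with hq_def
    have hdq : ∀ l : ℝ, 0 ≤ l → HasDerivAt (fun l : ℝ => (l:ℂ)/((l:ℂ)^2+z)) (q l) l := by
      intro l hl
      have h2 : HasDerivAt (fun w : ℂ => w^2+z) (2*(l:ℂ)) ((l:ℂ)) := by
        simpa using ((hasDerivAt_pow 2 ((l:ℂ))).add_const z)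
      have h1 : HasDerivAt (fun w : ℂ => w) 1 ((l:ℂ)) := hasDerivAt_id _
      have h3 := h1.div h2 (hne l hl)
      have heq : (1 * ((l:ℂ)^2+z) - (l:ℂ) * (2*(l:ℂ)))/(((l:ℂ)^2+z)^2) = q l := by
        rw [hq_def]
        congr 1
        ring
      rw [heq] at h3
      exact h3.comp_ofReal
    -- derivative of the amplitude factor
    have hda : ∀ l : ℝ, 0 < l → HasDerivAt (fun l : ℝ => a (l*r)) (r • deriv a (l*r)) l := by
      intro l hl
      have h1 : HasDerivAt (fun l : ℝ => l*r) r l := hasDerivAt_mul_const r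
      exact HasDerivAt.scomp l (hdiff (l*r) (mul_pos hl hr)) h1
    set F' : ℝ → ℂ := fun l => q l * a (l*r) + ((l:ℂ)/((l:ℂ)^2+z)) * (r • deriv a (l*r))
      with hF'_def
    have hF'd : ∀ l ∈ Set.Ioi (0:ℝ), HasDerivAt F (F' l) l := by
      intro l hl
      exact (hdq l (le_of_lt hl)).mul (hda l hl)
    have hed : ∀ l : ℝ, HasDerivAt e (c * e l) l := by
      intro l
      have h1 : HasDerivAt (fun l : ℝ => c * (l:ℂ)) c l := by
        simpa using ((hasDerivAt_id ((l:ℂ))).const_mul c).comp_ofReal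
      have h2 := h1.cexp
      rw [he_def]
      simpa [mul_comm] using h2
    have hGd : ∀ l ∈ Set.Ioi (0:ℝ),
        HasDerivAt (fun l => F l * e l * c⁻¹) (F' l * e l * c⁻¹ + F l * e l) l := by
      intro l hl
      have h1 := ((hF'd l hl).mul (hed l)).mul_const c⁻¹
      have heq : ∀ u v y : ℂ, (u + v * (c * y)) * c⁻¹ = u * c⁻¹ + v * y := by
        intro u v y
        field_simp
      rw [heq (F' l * e l) (F l) (e l)] at h1
      exact h1
    -- the decaying weight w and its integral
    set w : ℝ → ℝ := fun l => r * (1+l*r) ^ (-(3/2):ℝ) with hw_def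
    have hWd : ∀ l : ℝ, 0 ≤ l → HasDerivAt (fun l : ℝ => -2 * (1+l*r) ^ (-(1/2):ℝ)) (w l) l := by
      intro l hl
      have hpos : (0:ℝ) < 1 + l*r := by nlinarith
      have h1 : HasDerivAt (fun l : ℝ => 1 + l*r) r l := (hasDerivAt_mul_const r).const_add 1
      have h2 : HasDerivAt (fun x : ℝ => x ^ (-(1/2):ℝ))
          ((-(1/2)) * (1+l*r) ^ ((-(1/2):ℝ) - 1)) (1+l*r) :=
        Real.hasDerivAt_rpow_const (Or.inl (ne_of_gt hpos))
      have h3 := h2.comp l h1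
      have h4 := h3.const_mul (-2:ℝ)
      refine h4.congr_deriv ?_
      rw [hw_def]
      have he2 : ((-(1/2):ℝ) - 1) = (-(3/2):ℝ) := by norm_num
      rw [he2]
      ring
    have hWcont : ContinuousWithinAt (fun l : ℝ => -2 * (1+l*r) ^ (-(1/2):ℝ)) (Set.Ici 0) 0 :=
      (hWd 0 le_rfl).continuousAt.continuousWithinAt
    have hWtop : Tendsto (fun l : ℝ => -2 * (1+l*r) ^ (-(1/2):ℝ)) atTop (nhds 0) := by
      have h1 : Tendsto (fun l : ℝ => 1 + l*r) atTop atTop :=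
        tendsto_atTop_add_const_left _ 1 (Tendsto.atTop_mul_const hr tendsto_id)
      have h2 := (tendsto_rpow_neg_atTop (by norm_num : (0:ℝ) < 1/2)).comp h1
      have h3 : Tendsto (fun l : ℝ => (1+l*r) ^ (-(1/2):ℝ)) atTop (nhds 0) := by
        simpa [Function.comp_def] using h2
      simpa using h3.const_mul (-2:ℝ)
    have hWnonneg : ∀ x : ℝ, 0 < x → 0 ≤ w x := by
      intro x hx
      rw [hw_def]
      exact mul_nonneg hr.le (Real.rpow_nonneg (by nlinarith) _)
    have intW : IntegrableOn w (Set.Ioi (0:ℝ)) :=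
      integrableOn_Ioi_deriv_of_nonneg hWcont (fun x hx => hWd x (le_of_lt hx))
        (fun x hx => hWnonneg x hx) hWtop
    have valW : (∫ l in Set.Ioi (0:ℝ), w l) = 2 := by
      rw [integral_Ioi_of_hasDerivAt_of_tendsto hWcont (fun x hx => hWd x (le_of_lt hx)) intW hWtop]
      norm_num
    -- norm bounds for q
    have hq_le1 : ∀ l : ℝ, 0 ≤ l → ‖q l‖ ≤ 1 + l^2 := by
      intro l hl
      rw [hq_def]
      rw [norm_div, _root_.norm_pow]
      have hnum : ‖z - (l:ℂ)^2‖ ≤ 1 + l^2 := by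
        calc ‖z - (l:ℂ)^2‖ ≤ ‖z‖ + ‖(l:ℂ)^2‖ := norm_sub_le _ _
          _ = 1 + l^2 := by rw [hz, _root_.norm_pow, Complex.norm_real, Real.norm_eq_abs, _root_.sq_abs]
      calc ‖z - (l:ℂ)^2‖ / ‖(l:ℂ)^2 + z‖^2 ≤ ‖z - (l:ℂ)^2‖ / 1 := by
            apply div_le_div_of_nonneg_left (norm_nonneg _) one_pos
            nlinarith [hz1 l hl]
        _ = ‖z - (l:ℂ)^2‖ := by ring
        _ ≤ 1 + l^2 := hnum
    have hq_le2 : ∀ l : ℝ, 1 ≤ l → ‖q l‖ ≤ 2 * l ^ ((-2):ℝ) := by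
      intro l hl
      have hl0 : (0:ℝ) < l := lt_of_lt_of_le one_pos hl
      have hrp : l ^ ((-2):ℝ) = (l^2)⁻¹ := by
        rw [show ((-2):ℝ) = ((-2 : ℤ):ℝ) by norm_num, Real.rpow_intCast, zpow_neg]
        rw [zpow_two, sq]
      rw [hq_def, norm_div, _root_.norm_pow, hrp]
      have hnum : ‖z - (l:ℂ)^2‖ ≤ 2 * l^2 := by
        calc ‖z - (l:ℂ)^2‖ ≤ ‖z‖ + ‖(l:ℂ)^2‖ := norm_sub_le _ _
          _ = 1 + l^2 := by rw [hz, _root_.norm_pow, Complex.norm_real, Real.norm_eq_abs, _root_.sq_abs]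
          _ ≤ 2 * l^2 := by nlinarith
      have hden : (l^2)^2 ≤ ‖(l:ℂ)^2 + z‖^2 := by
        apply pow_le_pow_left₀ (by positivity) (hz2 l hl0.le)
      calc ‖z - (l:ℂ)^2‖ / ‖(l:ℂ)^2 + z‖^2 ≤ (2 * l^2) / (l^2)^2 :=
            div_le_div₀ (by positivity) hnum (by positivity) hden
        _ = 2 * (l^2)⁻¹ := by field_simp
    -- pointwise bound for F' e
    have hF'e_le : ∀ l : ℝ, 0 < l → ‖F' l * e l‖ ≤
        ‖q l‖ * (C0 * (1+l*r) ^ (-(1/2):ℝ)) + C1 * w l := by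
      intro l hl
      rw [norm_mul, hnorme l, mul_one, hF'_def]
      calc ‖q l * a (l*r) + ((l:ℂ)/((l:ℂ)^2+z)) * (r • deriv a (l*r))‖ ≤
            ‖q l * a (l*r)‖ + ‖((l:ℂ)/((l:ℂ)^2+z)) * (r • deriv a (l*r))‖ := norm_add_le _ _
        _ ≤ ‖q l‖ * (C0 * (1+l*r) ^ (-(1/2):ℝ)) + C1 * w l := by
            apply add_le_add
            · rw [norm_mul]
              exact mul_le_mul_of_nonneg_left (ha0 l hl) (norm_nonneg _)
            · rw [norm_mul, norm_smul, Real.norm_eq_abs, abs_of_pos hr]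
              calc ‖(l:ℂ)/((l:ℂ)^2+z)‖ * (r * ‖deriv a (l*r)‖) ≤
                    1 * (r * (C1 * (1+l*r) ^ (-(3/2):ℝ))) := by
                    apply mul_le_mul (hqc l hl.le)
                      (mul_le_mul_of_nonneg_left (h1 (l*r) (mul_pos hl hr)) hr.le)
                      (by positivity) zero_le_one
                _ = C1 * w l := by rw [hw_def]; ring
    -- continuity of F' e on Ioi 0
    have cF'e : ContinuousOn (fun l => F' l * e l) (Set.Ioi (0:ℝ)) := by
      have cq : ContinuousOn q (Set.Ioi (0:ℝ)) := by
        intro l hl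
        apply ContinuousAt.continuousWithinAt
        apply ContinuousAt.div
        · exact (continuous_const.sub (Complex.continuous_ofReal.pow 2)).continuousAt
        · exact (((Complex.continuous_ofReal.pow 2).add continuous_const).pow 2).continuousAt
        · exact pow_ne_zero 2 (hne l (le_of_lt hl))
      have cda : ContinuousOn (fun l : ℝ => r • deriv a (l*r)) (Set.Ioi (0:ℝ)) := by
        refine ContinuousOn.const_smul (g := fun l : ℝ => deriv a (l*r)) ?_ r
        apply ContinuousOn.comp hcont1 ((continuous_id.mul continuous_const).continuousOn)
        intro x hx
        exact mul_pos hx hr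
      exact ((cq.mul ca).add (cfrac.mul cda)).mul ce.continuousOn
    -- integrability of F' e
    have intF'e : IntegrableOn (fun l => F' l * e l) (Set.Ioi (0:ℝ)) := by
      rw [← Set.Ioc_union_Ioi_eq_Ioi (zero_le_one (α := ℝ))]
      apply MeasureTheory.IntegrableOn.union
      · have intc : IntegrableOn (fun _ : ℝ => 2*C0 + C1*r) (Set.Ioc (0:ℝ) 1) volume :=
          integrableOn_const measure_Ioc_lt_top.ne
        apply Integrable.mono' intc
        · exact (cF'e.mono Set.Ioc_subset_Ioi_self).aestronglyMeasurable measurableSet_Ioc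
        · filter_upwards [ae_restrict_mem measurableSet_Ioc] with l hl
          have hl0 : (0:ℝ) < l := hl.1
          calc ‖F' l * e l‖ ≤ ‖q l‖ * (C0 * (1+l*r) ^ (-(1/2):ℝ)) + C1 * w l := hF'e_le l hl0
            _ ≤ (1 + l^2) * (C0 * 1) + C1 * (r * 1) := by
                apply add_le_add
                · apply mul_le_mul (hq_le1 l hl0.le)
                    (mul_le_mul_of_nonneg_left
                      (hrpow1 (l*r) (mul_nonneg hl0.le hr.le) _ (by norm_num)) hC0)
                    (mul_nonneg hC0 (Real.rpow_nonneg (by nlinarith [mul_pos hl0 hr]) _))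
                    (by positivity)
                · rw [hw_def]
                  apply mul_le_mul_of_nonneg_left ?_ hC1
                  exact mul_le_mul_of_nonneg_left
                    (hrpow1 (l*r) (mul_nonneg hl0.le hr.le) _ (by norm_num)) hr.le
            _ ≤ 2 * (C0 * 1) + C1 * (r * 1) := by
                have : l^2 ≤ 1 := by nlinarith [hl.2]
                nlinarith
            _ = 2*C0 + C1*r := by ring
      · have intg : IntegrableOn (fun l : ℝ => 2*C0 * l ^ ((-2):ℝ) + C1 * w l)
            (Set.Ioi (1:ℝ)) volume := by
          apply Integrable.add
          · have := (integrableOn_Ioi_rpow_of_lt (show ((-2):ℝ) < -1 by norm_num) one_pos)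
            simpa [mul_assoc, IntegrableOn] using this.const_mul (2*C0)
          · exact (intW.mono_set (Set.Ioi_subset_Ioi zero_le_one)).const_mul C1
        apply Integrable.mono' intg
        · exact (cF'e.mono (Set.Ioi_subset_Ioi zero_le_one)).aestronglyMeasurable measurableSet_Ioi
        · filter_upwards [ae_restrict_mem measurableSet_Ioi] with l hl
          have hl0 : (0:ℝ) < l := lt_trans one_pos hl
          calc ‖F' l * e l‖ ≤ ‖q l‖ * (C0 * (1+l*r) ^ (-(1/2):ℝ)) + C1 * w l := hF'e_le l hl0
            _ ≤ (2 * l ^ ((-2):ℝ)) * (C0 * 1) + C1 * w l := by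
                apply add_le_add ?_ le_rfl
                apply mul_le_mul (hq_le2 l hl.le)
                  (mul_le_mul_of_nonneg_left
                    (hrpow1 (l*r) (mul_nonneg hl0.le hr.le) _ (by norm_num)) hC0)
                  (mul_nonneg hC0 (Real.rpow_nonneg (by nlinarith [mul_pos hl0 hr]) _))
                  (by positivity)
            _ = 2*C0 * l ^ ((-2):ℝ) + C1 * w l := by ring
    -- boundary behaviour
    have hG0 : F 0 * e 0 * c⁻¹ = 0 := by
      rw [hF_def]
      simp
    have hFe_le_lin : ∀ l : ℝ, 0 ≤ l → ‖F l * e l * c⁻¹‖ ≤ (C0 * ‖(c⁻¹ : ℂ)‖) * l := by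
      intro l hl
      rcases eq_or_lt_of_le hl with h | hl0
      · rw [← h, hG0]
        simp
      · rw [norm_mul]
        have hstep : ‖F l * e l‖ ≤ l * (C0 * 1) := by
          calc ‖F l * e l‖ ≤ ‖(l:ℂ)/((l:ℂ)^2 + z)‖ * (C0 * (1+l*r) ^ (-(1/2):ℝ)) :=
                hFe_le l hl0
            _ ≤ l * (C0 * 1) :=
                mul_le_mul (hqa l hl)
                  (mul_le_mul_of_nonneg_left
                    (hrpow1 (l*r) (mul_nonneg hl hr.le) _ (by norm_num)) hC0)
                  (mul_nonneg hC0 (Real.rpow_nonneg (by nlinarith [mul_pos hl0 hr]) _)) hl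
        calc ‖F l * e l‖ * ‖(c⁻¹:ℂ)‖ ≤ (l * (C0 * 1)) * ‖(c⁻¹:ℂ)‖ :=
              mul_le_mul_of_nonneg_right hstep (norm_nonneg _)
          _ = (C0 * ‖(c⁻¹:ℂ)‖) * l := by ring
    have hGcont : ContinuousWithinAt (fun l => F l * e l * c⁻¹) (Set.Ici 0) 0 := by
      have ht : Tendsto (fun l => F l * e l * c⁻¹) (nhdsWithin 0 (Set.Ici 0))
          (nhds (F 0 * e 0 * c⁻¹)) := by
        rw [hG0]
        apply squeeze_zero_norm' (a := fun l : ℝ => (C0 * ‖(c⁻¹:ℂ)‖) * l)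
        · exact eventually_nhdsWithin_of_forall (fun x hx => hFe_le_lin x hx)
        · have h4 : Tendsto (fun l : ℝ => (C0 * ‖(c⁻¹:ℂ)‖) * l) (nhdsWithin 0 (Set.Ici 0))
              (nhds ((C0 * ‖(c⁻¹:ℂ)‖) * 0)) :=
            Filter.Tendsto.mono_left
              (Continuous.tendsto (continuous_const.mul continuous_id) 0) nhdsWithin_le_nhds
          simpa using h4
      exact ht
    have hGtop : Tendsto (fun l => F l * e l * c⁻¹) atTop (nhds 0) := by
      apply squeeze_zero_norm' (a := fun l => (C0 * ‖(c⁻¹:ℂ)‖) * l⁻¹)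
      · filter_upwards [eventually_gt_atTop (0:ℝ)] with l hl0
        rw [norm_mul]
        have hstep : ‖F l * e l‖ ≤ l⁻¹ * (C0 * 1) := by
          calc ‖F l * e l‖ ≤ ‖(l:ℂ)/((l:ℂ)^2 + z)‖ * (C0 * (1+l*r) ^ (-(1/2):ℝ)) :=
                hFe_le l hl0
            _ ≤ l⁻¹ * (C0 * 1) :=
                mul_le_mul (hqb l hl0)
                  (mul_le_mul_of_nonneg_left
                    (hrpow1 (l*r) (mul_nonneg hl0.le hr.le) _ (by norm_num)) hC0)
                  (mul_nonneg hC0 (Real.rpow_nonneg (by nlinarith [mul_pos hl0 hr]) _))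
                  (by positivity)
        calc ‖F l * e l‖ * ‖(c⁻¹:ℂ)‖ ≤ (l⁻¹ * (C0 * 1)) * ‖(c⁻¹:ℂ)‖ :=
              mul_le_mul_of_nonneg_right hstep (norm_nonneg _)
          _ = (C0 * ‖(c⁻¹:ℂ)‖) * l⁻¹ := by ring
      · have := tendsto_inv_atTop_zero.const_mul (C0 * ‖(c⁻¹:ℂ)‖)
        simpa using this
    have intG' : IntegrableOn (fun l => F' l * e l * c⁻¹ + F l * e l) (Set.Ioi (0:ℝ)) :=
      (intF'e.mul_const c⁻¹).add intFe
    have key : (∫ l in Set.Ioi (0:ℝ), (F' l * e l * c⁻¹ + F l * e l)) = 0 := by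
      rw [integral_Ioi_of_hasDerivAt_of_tendsto hGcont hGd intG' hGtop, hG0, sub_zero]
    have keq : (∫ l in Set.Ioi (0:ℝ), F l * e l) =
        -((∫ l in Set.Ioi (0:ℝ), F' l * e l) * c⁻¹) := by
      have h2 : (∫ l in Set.Ioi (0:ℝ), F' l * e l * c⁻¹) +
          (∫ l in Set.Ioi (0:ℝ), F l * e l) = 0 := by
        rw [← MeasureTheory.integral_add (intF'e.mul_const c⁻¹) intFe]
        exact key
      have h3 : (∫ l in Set.Ioi (0:ℝ), F' l * e l * c⁻¹) =
          (∫ l in Set.Ioi (0:ℝ), F' l * e l) * c⁻¹ :=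
        MeasureTheory.integral_mul_const c⁻¹ _
      rw [h3] at h2
      linear_combination h2
    -- bound the integral of ‖F' e‖
    have hrhalf : r ^ (-(1/2):ℝ) ≤ 2 := by
      have hx0 : (0:ℝ) ≤ r ^ (-(1/2):ℝ) := Real.rpow_nonneg hr.le _
      have h2 : (r ^ (-(1/2):ℝ))^2 = r⁻¹ := by
        rw [← Real.rpow_natCast (r ^ (-(1/2):ℝ)) 2, ← Real.rpow_mul hr.le]
        norm_num [Real.rpow_neg_one]
      have h3 : r⁻¹ ≤ 4/3 := by
        rw [inv_le_comm₀ hr (by norm_num)]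
        linarith
      nlinarith
    have intNF' : IntegrableOn (fun l => ‖F' l * e l‖) (Set.Ioi (0:ℝ)) := intF'e.norm
    have hsplitF' : (∫ l in Set.Ioi (0:ℝ), ‖F' l * e l‖) =
        (∫ l in Set.Ioc (0:ℝ) 1, ‖F' l * e l‖) + ∫ l in Set.Ioi (1:ℝ), ‖F' l * e l‖ := by
      rw [← MeasureTheory.setIntegral_union (Set.Ioc_disjoint_Ioi le_rfl) measurableSet_Ioi
        (intNF'.mono_set Set.Ioc_subset_Ioi_self)
        (intNF'.mono_set (Set.Ioi_subset_Ioi zero_le_one)),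
        Set.Ioc_union_Ioi_eq_Ioi zero_le_one]
    have hwIoc : (∫ l in Set.Ioc (0:ℝ) 1, w l) ≤ 2 := by
      rw [← valW]
      apply MeasureTheory.setIntegral_mono_set intW
      · filter_upwards [ae_restrict_mem measurableSet_Ioi] with x hx
        exact hWnonneg x hx
      · exact HasSubset.Subset.eventuallyLE Set.Ioc_subset_Ioi_self
    have hwIoi : (∫ l in Set.Ioi (1:ℝ), w l) ≤ 2 := by
      rw [← valW]
      apply MeasureTheory.setIntegral_mono_set intW
      · filter_upwards [ae_restrict_mem measurableSet_Ioi] with x hx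
        exact hWnonneg x hx
      · exact HasSubset.Subset.eventuallyLE (Set.Ioi_subset_Ioi zero_le_one)
    have bb1 : (∫ l in Set.Ioc (0:ℝ) 1, ‖F' l * e l‖) ≤ 4*C0*r ^ (-(1/2):ℝ) + 2*C1 := by
      have intg1 : IntegrableOn (fun l : ℝ => 2*C0*r ^ (-(1/2):ℝ) * l ^ (-(1/2):ℝ))
          (Set.Ioc (0:ℝ) 1) := by
        have h := (intervalIntegral.intervalIntegrable_rpow'
          (show (-1:ℝ) < -(1/2) by norm_num) : IntervalIntegrable (fun x : ℝ => x ^ (-(1/2):ℝ)) volume 0 1)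
        exact ((intervalIntegrable_iff_integrableOn_Ioc_of_le zero_le_one).1 h).const_mul _
      have intg2 : IntegrableOn (fun l : ℝ => C1 * w l) (Set.Ioc (0:ℝ) 1) :=
        (intW.mono_set Set.Ioc_subset_Ioi_self).const_mul C1
      have hmono : (∫ l in Set.Ioc (0:ℝ) 1, ‖F' l * e l‖) ≤
          ∫ l in Set.Ioc (0:ℝ) 1, (2*C0*r ^ (-(1/2):ℝ) * l ^ (-(1/2):ℝ) + C1 * w l) := by
        apply MeasureTheory.setIntegral_mono_on
          (intNF'.mono_set Set.Ioc_subset_Ioi_self) (intg1.add intg2) measurableSet_Ioc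
        intro l hl
        have hl0 : (0:ℝ) < l := hl.1
        calc ‖F' l * e l‖ ≤ ‖q l‖ * (C0 * (1+l*r) ^ (-(1/2):ℝ)) + C1 * w l := hF'e_le l hl0
          _ ≤ 2 * (C0 * (r ^ (-(1/2):ℝ) * l ^ (-(1/2):ℝ))) + C1 * w l := by
              apply add_le_add ?_ le_rfl
              apply mul_le_mul
              · calc ‖q l‖ ≤ 1 + l^2 := hq_le1 l hl0.le
                  _ ≤ 2 := by nlinarith [hl.2]
              · apply mul_le_mul_of_nonneg_left ?_ hC0
                calc (1+l*r) ^ (-(1/2):ℝ) ≤ (l*r) ^ (-(1/2):ℝ) :=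
                      Real.rpow_le_rpow_of_nonpos (mul_pos hl0 hr) (by linarith) (by norm_num)
                  _ = r ^ (-(1/2):ℝ) * l ^ (-(1/2):ℝ) := by
                      rw [Real.mul_rpow hl0.le hr.le]; ring
              · exact mul_nonneg hC0 (Real.rpow_nonneg (by nlinarith [mul_pos hl0 hr]) _)
              · norm_num
          _ = 2*C0*r ^ (-(1/2):ℝ) * l ^ (-(1/2):ℝ) + C1 * w l := by ring
      have hval1 : (∫ l in Set.Ioc (0:ℝ) 1, 2*C0*r ^ (-(1/2):ℝ) * l ^ (-(1/2):ℝ)) =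
          4*C0*r ^ (-(1/2):ℝ) := by
        rw [MeasureTheory.integral_const_mul, ← intervalIntegral.integral_of_le zero_le_one,
          integral_rpow (Or.inl (by norm_num : (-1:ℝ) < -(1/2)))]
        rw [Real.zero_rpow (by norm_num : (-(1/2):ℝ) + 1 ≠ 0), Real.one_rpow]
        ring
      have hval2 : (∫ l in Set.Ioc (0:ℝ) 1, C1 * w l) ≤ 2*C1 := by
        rw [MeasureTheory.integral_const_mul]
        nlinarith [hwIoc]
      calc (∫ l in Set.Ioc (0:ℝ) 1, ‖F' l * e l‖) ≤
          ∫ l in Set.Ioc (0:ℝ) 1, (2*C0*r ^ (-(1/2):ℝ) * l ^ (-(1/2):ℝ) + C1 * w l) := hmono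
        _ = (∫ l in Set.Ioc (0:ℝ) 1, 2*C0*r ^ (-(1/2):ℝ) * l ^ (-(1/2):ℝ)) +
            ∫ l in Set.Ioc (0:ℝ) 1, C1 * w l := MeasureTheory.integral_add intg1 intg2
        _ ≤ 4*C0*r ^ (-(1/2):ℝ) + 2*C1 := by rw [hval1]; linarith [hval2]
    have bb2 : (∫ l in Set.Ioi (1:ℝ), ‖F' l * e l‖) ≤ 2*C0 + 2*C1 := by
      have intg1 : IntegrableOn (fun l : ℝ => 2*C0 * l ^ ((-2):ℝ)) (Set.Ioi (1:ℝ)) := by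
        have := (integrableOn_Ioi_rpow_of_lt (show ((-2):ℝ) < -1 by norm_num) one_pos)
        simpa [mul_assoc, IntegrableOn] using this.const_mul (2*C0)
      have intg2 : IntegrableOn (fun l : ℝ => C1 * w l) (Set.Ioi (1:ℝ)) :=
        (intW.mono_set (Set.Ioi_subset_Ioi zero_le_one)).const_mul C1
      have hmono : (∫ l in Set.Ioi (1:ℝ), ‖F' l * e l‖) ≤
          ∫ l in Set.Ioi (1:ℝ), (2*C0 * l ^ ((-2):ℝ) + C1 * w l) := by
        apply MeasureTheory.setIntegral_mono_on
          (intNF'.mono_set (Set.Ioi_subset_Ioi zero_le_one)) (intg1.add intg2) measurableSet_Ioi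
        intro l hl
        have hl0 : (0:ℝ) < l := lt_trans one_pos hl
        calc ‖F' l * e l‖ ≤ ‖q l‖ * (C0 * (1+l*r) ^ (-(1/2):ℝ)) + C1 * w l := hF'e_le l hl0
          _ ≤ (2 * l ^ ((-2):ℝ)) * (C0 * 1) + C1 * w l := by
              apply add_le_add ?_ le_rfl
              apply mul_le_mul (hq_le2 l hl.le)
                (mul_le_mul_of_nonneg_left
                  (hrpow1 (l*r) (mul_nonneg hl0.le hr.le) _ (by norm_num)) hC0)
                (mul_nonneg hC0 (Real.rpow_nonneg (by nlinarith [mul_pos hl0 hr]) _))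
                (by positivity)
          _ = 2*C0 * l ^ ((-2):ℝ) + C1 * w l := by ring
      have hval1 : (∫ l in Set.Ioi (1:ℝ), 2*C0 * l ^ ((-2):ℝ)) = 2*C0 := by
        rw [MeasureTheory.integral_const_mul, integral_Ioi_rpow_of_lt (by norm_num) one_pos]
        norm_num
      have hval2 : (∫ l in Set.Ioi (1:ℝ), C1 * w l) ≤ 2*C1 := by
        rw [MeasureTheory.integral_const_mul]
        nlinarith [hwIoi]
      calc (∫ l in Set.Ioi (1:ℝ), ‖F' l * e l‖) ≤
          ∫ l in Set.Ioi (1:ℝ), (2*C0 * l ^ ((-2):ℝ) + C1 * w l) := hmono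
        _ = (∫ l in Set.Ioi (1:ℝ), 2*C0 * l ^ ((-2):ℝ)) + ∫ l in Set.Ioi (1:ℝ), C1 * w l :=
            MeasureTheory.integral_add intg1 intg2
        _ ≤ 2*C0 + 2*C1 := by rw [hval1]; linarith [hval2]
    -- put everything together
    have htot : (∫ l in Set.Ioi (0:ℝ), ‖F' l * e l‖) ≤ 10*C0 + 4*C1 := by
      rw [hsplitF']
      have : 4*C0*r ^ (-(1/2):ℝ) ≤ 8*C0 := by nlinarith [Real.rpow_nonneg hr.le (-(1/2):ℝ)]
      linarith [bb1, bb2]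
    calc ‖∫ l in Set.Ioi (0:ℝ), F l * e l‖
        = ‖(∫ l in Set.Ioi (0:ℝ), F' l * e l) * c⁻¹‖ := by rw [keq, norm_neg]
      _ = ‖∫ l in Set.Ioi (0:ℝ), F' l * e l‖ * ‖(c⁻¹:ℂ)‖ := norm_mul _ _
      _ ≤ (10*C0 + 4*C1) * ‖(c⁻¹:ℂ)‖ := by
          apply mul_le_mul_of_nonneg_right ?_ (norm_nonneg _)
          exact (MeasureTheory.norm_integral_le_integral_norm _).trans htot
      _ = (10*C0 + 4*C1) * r⁻¹ := by rw [norm_inv, hnormc]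
      _ ≤ 20*(C0+C1+1) * r⁻¹ := by
          apply mul_le_mul_of_nonneg_right (by linarith) (by positivity)


end AuxStatement0

set_option maxHeartbeats 1000000

/-- Let `a : (0,∞) → ℂ` be smooth with `|a⁽ᵏ⁾(r)| ≤ Cₖ (1+r)^{-1/2-k}` for all `r > 0`.
Then there is a constant `C > 0` (independent of `δ` and `r`) such that for every
`δ ∈ (-1,1) \ {0}`, every `r > 0` and either sign `ε = ±1`,
`|∫₀^∞ λ/(λ² + √(1-δ²) - iδ) · a(λr) e^{±iλr} dλ|` is bounded by `C |log r|` when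
`0 < r < 3/4` and by `C r⁻¹` when `r ≥ 3/4`. -/
theorem statement0 (a : ℝ → ℂ) (Ck : ℕ → ℝ)
    (ha_smooth : ContDiffOn ℝ (⊤ : ℕ∞) a (Set.Ioi 0))
    (ha_bound : ∀ k : ℕ, ∀ r : ℝ, 0 < r →
      ‖iteratedDerivWithin k a (Set.Ioi 0) r‖ ≤ Ck k * (1 + r) ^ (-(1/2 : ℝ) - k)) :
    ∃ C : ℝ, 0 < C ∧ ∀ δ : ℝ, δ ∈ Set.Ioo (-1 : ℝ) 1 → δ ≠ 0 →
      ∀ r : ℝ, 0 < r → ∀ ε : ℝ, (ε = 1 ∨ ε = -1) →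
      ‖∫ l in Set.Ioi (0:ℝ),
          (l : ℂ) / ((l : ℂ)^2 + (Real.sqrt (1 - δ^2) : ℝ) - Complex.I * (δ : ℂ)) *
            a (l * r) * Complex.exp (ε * Complex.I * (l * r : ℝ))‖ ≤
        (if r < 3/4 then C * |Real.log r| else C * r⁻¹) := by
  set C0 := max (Ck 0) 0 with hC0_def
  set C1 := max (Ck 1) 0 with hC1_def
  have hC0 : 0 ≤ C0 := le_max_right _ _
  have hC1 : 0 ≤ C1 := le_max_right _ _
  refine ⟨20*(C0+C1+1), by nlinarith, ?_⟩
  intro δ hδ hδ0 r hr ε hε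
  -- differentiability facts for a
  have hdiffOn : DifferentiableOn ℝ a (Set.Ioi 0) :=
    ha_smooth.differentiableOn (by simp)
  have hdiff : ∀ x : ℝ, 0 < x → HasDerivAt a (deriv a x) x := by
    intro x hx
    exact ((hdiffOn x hx).differentiableAt (Ioi_mem_nhds hx)).hasDerivAt
  have hderiv_eq : ∀ x ∈ Set.Ioi (0:ℝ), derivWithin a (Set.Ioi 0) x = deriv a x :=
    fun x hx => derivWithin_of_isOpen isOpen_Ioi hx
  have h0 : ∀ x : ℝ, 0 < x → ‖a x‖ ≤ C0 * (1+x) ^ (-(1/2):ℝ) := by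
    intro x hx
    have hb := ha_bound 0 x hx
    rw [iteratedDerivWithin_zero] at hb
    have he : (-(1/2:ℝ) - ((0:ℕ):ℝ)) = (-(1/2):ℝ) := by norm_num
    rw [he] at hb
    calc ‖a x‖ ≤ Ck 0 * (1+x) ^ (-(1/2):ℝ) := hb
      _ ≤ C0 * (1+x) ^ (-(1/2):ℝ) :=
          mul_le_mul_of_nonneg_right (le_max_left _ _) (Real.rpow_nonneg (by linarith) _)
  have h1 : ∀ x : ℝ, 0 < x → ‖deriv a x‖ ≤ C1 * (1+x) ^ (-(3/2):ℝ) := by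
    intro x hx
    have hb := ha_bound 1 x hx
    rw [iteratedDerivWithin_one, hderiv_eq x hx] at hb
    have he : (-(1/2:ℝ) - ((1:ℕ):ℝ)) = (-(3/2):ℝ) := by norm_num
    rw [he] at hb
    calc ‖deriv a x‖ ≤ Ck 1 * (1+x) ^ (-(3/2):ℝ) := hb
      _ ≤ C1 * (1+x) ^ (-(3/2):ℝ) :=
          mul_le_mul_of_nonneg_right (le_max_left _ _) (Real.rpow_nonneg (by linarith) _)
  have hcont1 : ContinuousOn (deriv a) (Set.Ioi 0) := by
    have hcd : ContinuousOn (derivWithin a (Set.Ioi 0)) (Set.Ioi 0) :=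
      ha_smooth.continuousOn_derivWithin (uniqueDiffOn_Ioi 0) (by exact_mod_cast le_top)
    exact hcd.congr (fun x hx => (hderiv_eq x hx).symm)
  -- facts about z
  have hδ2 : δ^2 < 1 := by nlinarith [hδ.1, hδ.2]
  set s := Real.sqrt (1 - δ^2) with hs_def
  have hs0 : 0 ≤ s := Real.sqrt_nonneg _
  have hs2 : s^2 = 1 - δ^2 := Real.sq_sqrt (by linarith)
  set z : ℂ := (s:ℂ) - Complex.I * (δ:ℂ) with hz_def
  have hwsq : ∀ l : ℝ, ‖(l:ℂ)^2 + z‖^2 = (l^2+s)^2 + δ^2 := fun l => normw_sq s δ l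
  have hz : ‖z‖ = 1 := by
    have h := hwsq 0
    simp only [Complex.ofReal_zero, ne_eq] at h
    rw [show ((0:ℂ)^2 + z) = z by ring] at h
    nlinarith [norm_nonneg z]
  have hz1 : ∀ l : ℝ, 0 ≤ l → 1 ≤ ‖(l:ℂ)^2 + z‖ := by
    intro l hl
    have h := hwsq l
    nlinarith [norm_nonneg ((l:ℂ)^2 + z), sq_nonneg l, mul_nonneg (mul_nonneg hl hl) hs0,
      sq_nonneg (l*l)]
  have hz2 : ∀ l : ℝ, 0 ≤ l → l^2 ≤ ‖(l:ℂ)^2 + z‖ := by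
    intro l hl
    have h := hwsq l
    nlinarith [norm_nonneg ((l:ℂ)^2 + z), sq_nonneg l, mul_nonneg (mul_nonneg hl hl) hs0,
      sq_nonneg (l*l), sq_nonneg (‖(l:ℂ)^2 + z‖ + l^2), sq_nonneg δ]
  -- rewrite the integrand
  have hfun : ∀ l : ℝ,
      (l : ℂ) / ((l : ℂ)^2 + (s : ℝ) - Complex.I * (δ : ℂ)) *
          a (l * r) * Complex.exp ((ε:ℂ) * Complex.I * ((l * r : ℝ) : ℂ)) =
      (l:ℂ)/((l:ℂ)^2 + z) * a (l*r) * Complex.exp ((ε:ℂ) * Complex.I * (r:ℂ) * (l:ℂ)) := by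
    intro l
    rw [add_sub_assoc, ← hz_def]
    congr 1
    push_cast
    ring
  simp only [hfun]
  exact core a C0 C1 hC0 hC1 hdiff hcont1 h0 h1 z hz hz1 hz2 r hr ε hε
end

section
/- Let α̃ : [0,2π] → ℝ be Lipschitz with mean value α := (1/(2π)) ∫_0^{2π} α̃(θ) dθ satisfying α ∈ (−1,1) and α ≠ 0. Then there exists a constant C > 0 (depending on α) such that for all θ₁, θ₂ ∈ [0,2π]: |A_α(θ₁,θ₂)| + ∫_0^∞ |B_α(s,θ₁,θ₂)| ds ≤ C. -/
open MeasureTheory Real Set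
open scoped ENNReal

/-- The kernel `A_α(θ₁,θ₂)` from the Aharonov–Bohm resolvent. -/
noncomputable def Aker (at' : ℝ → ℝ) (α θ₁ θ₂ : ℝ) : ℂ :=
  (1 / (4 * (π : ℂ)^2)) * Complex.exp (Complex.I * ((∫ t in θ₁..θ₂, at' t : ℝ) : ℂ)) *
    ((if |θ₁ - θ₂| ∈ Set.Icc (0:ℝ) π then (1:ℂ) else 0) +
      Complex.exp (-(2 * (π:ℂ) * Complex.I * (α:ℂ))) *
        (if |θ₁ - θ₂| ∈ Set.Icc (π:ℝ) (2*π) then (1:ℂ) else 0))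

/-- The kernel `B_α(s,θ₁,θ₂)` from the Aharonov–Bohm resolvent. -/
noncomputable def Bker (at' : ℝ → ℝ) (α s θ₁ θ₂ : ℝ) : ℂ :=
  -(1 / (4 * (π : ℂ)^2)) *
    Complex.exp (-Complex.I * (α:ℂ) * ((θ₁ - θ₂ : ℝ) : ℂ) +
      Complex.I * ((∫ t in θ₂..θ₁, at' t : ℝ) : ℂ)) *
    (((Real.sin (|α| * π) * Real.exp (-(|α| * s)) : ℝ) : ℂ) +
      ((Real.sin (α * π) : ℝ) : ℂ) *
        ((((Real.exp (-s) - Real.cos (θ₁ - θ₂ + π)) * Real.sinh (α * s) : ℝ) : ℂ) -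
            Complex.I * ((Real.sin (θ₁ - θ₂ + π) * Real.cosh (α * s) : ℝ) : ℂ)) /
          ((Real.cosh s - Real.cos (θ₁ - θ₂ + π) : ℝ) : ℂ))

/- ### Auxiliary lemmas -/


lemma AB2_sinh_le_mul_exp {x : ℝ} (h : 0 ≤ x) : Real.sinh x ≤ x * Real.exp x := by
  have h1 := Real.add_one_le_exp (-(2*x))
  rw [Real.sinh_eq]
  have h2 : Real.exp (-x) = Real.exp x * Real.exp (-(2*x)) := by
    rw [← Real.exp_add]; ring_nf
  nlinarith [Real.exp_pos x]

lemma AB2_cosh_le_exp_abs (x : ℝ) : Real.cosh x ≤ Real.exp |x| := by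
  rw [← Real.cosh_abs, Real.cosh_eq]
  nlinarith [Real.exp_pos (-|x|), Real.exp_le_exp.mpr (neg_abs_le x),
    Real.exp_le_exp.mpr (le_abs_self x), abs_nonneg x]

lemma AB2_sq_half_le_cosh_sub_one {s : ℝ} (h : 0 < s) : s^2/2 ≤ Real.cosh s - 1 := by
  have h1 : s/2 < Real.sinh (s/2) := (Real.self_lt_sinh_iff).mpr (by linarith)
  have h2 : Real.cosh s = Real.cosh (s/2)^2 + Real.sinh (s/2)^2 := by
    rw [← Real.cosh_two_mul]; ring_nf
  have h3 := Real.cosh_sq (s/2)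
  nlinarith

set_option maxHeartbeats 1000000 in
lemma AB2_real_bound (a s θ : ℝ) (ha0 : 0 < a) (ha1 : a < 1) (hs : 0 < s) :
    (|Real.exp (-s) - Real.cos θ| * Real.sinh (a*s)
      + |Real.sin θ| * Real.cosh (a*s)) / (Real.cosh s - Real.cos θ)
    ≤ (2*a*(1+s) + 10) * Real.exp (-((1-a)*s))
      + (if s ≤ 1 then 6 * Real.sqrt (2*(1 - Real.cos θ)) /
          (s^2 + Real.sqrt (2*(1 - Real.cos θ))^2) else 0) := by
  set c := 1 - Real.cos θ with hcdef
  set d := Real.cosh s - 1 with hddef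
  set b := Real.sqrt (2*c) with hbdef
  set X := Real.exp (-((1-a)*s)) with hXdef
  have hc0 : 0 ≤ c := by have := Real.cos_le_one θ; rw [hcdef]; linarith
  have hc2 : c ≤ 2 := by have := Real.neg_one_le_cos θ; rw [hcdef]; linarith
  have hd : 0 < d := by
    have := Real.one_lt_cosh.mpr hs.ne'; rw [hddef]; linarith
  have hdc : 0 < d + c := by linarith
  have hDeq : Real.cosh s - Real.cos θ = d + c := by rw [hddef, hcdef]; ring
  have hb0 : 0 ≤ b := Real.sqrt_nonneg _
  have hb2 : b^2 = 2*c := Real.sq_sqrt (by linarith)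
  have hX0 : 0 < X := Real.exp_pos _
  have hE2 : Real.exp (-s) ≤ 1 := by
    rw [Real.exp_le_one_iff]; linarith
  have hE2pos := Real.exp_pos (-s)
  have hinv : Real.exp (-s) * Real.exp s = 1 := by
    rw [← Real.exp_add]; simp
  have hexp : Real.exp (a*s) * Real.exp (-s) = X := by
    rw [hXdef, ← Real.exp_add]; ring_nf
  have hsinh0 : 0 ≤ Real.sinh (a*s) := by
    rw [← Real.sinh_zero]; exact Real.sinh_le_sinh.mpr (by positivity)
  have hcosh0 : 0 < Real.cosh (a*s) := Real.cosh_pos _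
  have F1 : Real.sinh (a*s) ≤ a*s*Real.exp (a*s) := by
    have := AB2_sinh_le_mul_exp (x := a*s) (by positivity); linarith
  have F2 : Real.sinh (a*s) ≤ Real.exp (a*s)/2 := by
    rw [Real.sinh_eq]; nlinarith [Real.exp_pos (-(a*s))]
  have hnum : |Real.exp (-s) - Real.cos θ| ≤ (1 - Real.exp (-s)) + c := by
    have : Real.exp (-s) - Real.cos θ = c - (1 - Real.exp (-s)) := by
      rw [hcdef]; ring
    rw [this]
    refine (abs_sub _ _).trans ?_
    rw [abs_of_nonneg hc0, abs_of_nonneg (by linarith)]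
    linarith
  have hx2 : s ≤ (1+s) * (1 - Real.exp (-s)) := by
    have h1 : (1+s) * Real.exp (-s) ≤ 1 := by
      nlinarith [Real.add_one_le_exp s, hinv, hE2pos]
    nlinarith
  have hsq : (1 - Real.exp (-s))^2 = 2 * Real.exp (-s) * d := by
    rw [hddef, Real.cosh_eq]
    linear_combination -hinv
  have F3 : (1 - Real.exp (-s)) * Real.sinh (a*s) ≤ 2*a*(1+s)*X*d := by
    calc (1 - Real.exp (-s)) * Real.sinh (a*s)
        ≤ (1 - Real.exp (-s)) * (a*s*Real.exp (a*s)) := by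
          apply mul_le_mul_of_nonneg_left F1 (by linarith)
      _ = a*Real.exp (a*s)*(s*(1 - Real.exp (-s))) := by ring
      _ ≤ a*Real.exp (a*s)*((1+s)*(1 - Real.exp (-s))^2) := by
          have h9 : s*(1 - Real.exp (-s)) ≤ (1+s)*(1 - Real.exp (-s))^2 := by nlinarith
          have h0 : (0:ℝ) ≤ a*Real.exp (a*s) := by positivity
          exact mul_le_mul_of_nonneg_left h9 h0
      _ = 2*a*(1+s)*(Real.exp (a*s)*Real.exp (-s))*d := by rw [hsq]; ring
      _ = 2*a*(1+s)*X*d := by rw [hexp]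
  have F4 : c * Real.sinh (a*s) ≤ 2*X*(d+c) := by
    have h1 : Real.exp s / 2 ≤ d + 2 := by
      rw [hddef, Real.cosh_eq]; nlinarith
    have h2 : Real.sinh (a*s) ≤ X * (d+2) := by
      calc Real.sinh (a*s) ≤ Real.exp (a*s)/2 := F2
        _ = (Real.exp (a*s) * Real.exp (-s)) * (Real.exp s / 2) := by
            linear_combination (-(Real.exp (a*s))/2) * hinv
        _ = X * (Real.exp s / 2) := by rw [hexp]
        _ ≤ X * (d+2) := mul_le_mul_of_nonneg_left h1 hX0.le
    calc c * Real.sinh (a*s) ≤ c * (X * (d+2)) := mul_le_mul_of_nonneg_left h2 hc0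
      _ = X * (c*(d+2)) := by ring
      _ ≤ X * (2*(d+c)) := by
          refine mul_le_mul_of_nonneg_left ?_ hX0.le
          nlinarith [mul_le_mul_of_nonneg_right hc2 hd.le]
      _ = 2*X*(d+c) := by ring
  have hcosh_le : Real.cosh (a*s) ≤ Real.exp (a*s) := by
    have := AB2_cosh_le_exp_abs (a*s)
    rwa [abs_of_nonneg (by positivity)] at this
  have hsin_b : |Real.sin θ| ≤ b := by
    have h1 := Real.sin_sq_add_cos_sq θ
    have h2 : |Real.sin θ| = Real.sqrt (Real.sin θ^2) := (Real.sqrt_sq_eq_abs _).symm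
    rw [h2, hbdef]
    apply Real.sqrt_le_sqrt
    rw [hcdef]
    nlinarith [Real.neg_one_le_cos θ]
  have key1 : |Real.exp (-s) - Real.cos θ| * Real.sinh (a*s) / (d+c)
      ≤ 2*a*(1+s)*X + 2*X := by
    rw [div_le_iff₀ hdc]
    have h1 : |Real.exp (-s) - Real.cos θ| * Real.sinh (a*s)
        ≤ (1 - Real.exp (-s)) * Real.sinh (a*s) + c * Real.sinh (a*s) := by
      nlinarith [mul_le_mul_of_nonneg_right hnum hsinh0]
    have h2 : 2*a*(1+s)*X*d + 2*X*(d+c) ≤ (2*a*(1+s)*X + 2*X)*(d+c) := by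
      nlinarith [mul_nonneg (mul_nonneg (by positivity : (0:ℝ) ≤ 2*a*(1+s)) hX0.le) hc0]
    linarith [add_le_add F3 F4]
  rw [hDeq, add_div]
  by_cases hs1 : s ≤ 1
  · rw [if_pos hs1]
    have hc3 : Real.cosh (a*s) ≤ 3 := by
      have h1 : a*s ≤ 1 := by nlinarith
      have h2 : Real.exp (a*s) ≤ Real.exp 1 := Real.exp_le_exp.mpr h1
      have h3 : Real.exp 1 < 2.7182818286 := Real.exp_one_lt_d9
      linarith
    have hden : (s^2 + b^2)/2 ≤ d + c := by
      have := AB2_sq_half_le_cosh_sub_one hs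
      rw [hb2, hddef]; linarith
    have key2 : |Real.sin θ| * Real.cosh (a*s) / (d+c) ≤ 6*b/(s^2+b^2) := by
      calc |Real.sin θ| * Real.cosh (a*s) / (d+c)
          ≤ (b*3)/((s^2+b^2)/2) := by
            apply div_le_div₀ (by positivity) ?_ (by positivity) hden
            exact mul_le_mul hsin_b hc3 (Real.cosh_pos _).le hb0
        _ = 6*b/(s^2+b^2) := by
            rw [div_div_eq_mul_div]; ring
    nlinarith [key1, key2, hX0]
  · rw [if_neg hs1]
    push_neg at hs1
    have hd8 : Real.exp s / 8 ≤ d := by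
      rw [hddef, Real.cosh_eq]
      have h1 : (2.7182818283 : ℝ) < Real.exp 1 := Real.exp_one_gt_d9
      have h2 : Real.exp 1 ≤ Real.exp s := Real.exp_le_exp.mpr hs1.le
      nlinarith [Real.exp_pos (-s)]
    have key2 : |Real.sin θ| * Real.cosh (a*s) / (d+c) ≤ 8*X := by
      calc |Real.sin θ| * Real.cosh (a*s) / (d+c)
          ≤ Real.exp (a*s) / (Real.exp s / 8) := by
            apply div_le_div₀ (Real.exp_pos _).le ?_ (by positivity) (by linarith)
            nlinarith [abs_le.mpr ⟨Real.neg_one_le_sin θ, Real.sin_le_one θ⟩,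
              Real.cosh_pos (a*s), abs_nonneg (Real.sin θ)]
        _ = 8*X := by
            rw [← hexp, Real.exp_neg, div_div_eq_mul_div]
            field_simp
    nlinarith [key1, key2, hX0]

lemma AB2_norm_Bker_le (at' : ℝ → ℝ) (α s θ₁ θ₂ : ℝ) (hs : 0 < s) :
    ‖Bker at' α s θ₁ θ₂‖ ≤
      Real.exp (-(|α| * s)) +
        (|Real.exp (-s) - Real.cos (θ₁ - θ₂ + π)| * Real.sinh (|α| * s)
          + |Real.sin (θ₁ - θ₂ + π)| * Real.cosh (|α| * s)) / (Real.cosh s - Real.cos (θ₁ - θ₂ + π)) := by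
  have hD : 0 < Real.cosh s - Real.cos (θ₁ - θ₂ + π) := by
    have h1 : 1 < Real.cosh s := Real.one_lt_cosh.mpr hs.ne'
    have h2 := Real.cos_le_one (θ₁ - θ₂ + π)
    linarith
  rw [Bker, norm_mul, norm_mul]
  have hK : ‖-(1 / (4 * (π:ℂ)^2))‖ ≤ 1 := by
    rw [norm_neg, norm_div, norm_one, norm_mul, norm_pow, Complex.norm_real]
    have h4 : ‖(4:ℂ)‖ = 4 := by norm_num
    rw [h4, Real.norm_eq_abs, abs_of_pos pi_pos, div_le_one (by positivity)]
    nlinarith [pi_gt_three]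
  have hE : ‖Complex.exp (-Complex.I * (α:ℂ) * ((θ₁ - θ₂ : ℝ) : ℂ) +
      Complex.I * ((∫ t in θ₂..θ₁, at' t : ℝ) : ℂ))‖ = 1 := by
    rw [Complex.norm_exp]; simp
  rw [hE, mul_one]
  refine (mul_le_of_le_one_left (norm_nonneg _) hK).trans ?_
  refine (norm_add_le _ _).trans ?_
  gcongr
  · rw [Complex.norm_real, Real.norm_eq_abs, abs_mul, abs_of_pos (Real.exp_pos _)]
    calc |Real.sin (|α| * π)| * Real.exp (-(|α| * s))
        ≤ 1 * Real.exp (-(|α| * s)) := by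
          gcongr
          exact abs_le.mpr ⟨Real.neg_one_le_sin _, Real.sin_le_one _⟩
      _ = _ := one_mul _
  · rw [norm_div, norm_mul, Complex.norm_real, Complex.norm_real, Real.norm_eq_abs,
      Real.norm_eq_abs, abs_of_pos hD]
    gcongr
    calc |Real.sin (α * π)| * ‖_‖ ≤ 1 * ‖_‖ := by
          gcongr; exact abs_le.mpr ⟨Real.neg_one_le_sin _, Real.sin_le_one _⟩
      _ = ‖(((Real.exp (-s) - Real.cos (θ₁ - θ₂ + π)) * Real.sinh (α * s) : ℝ) : ℂ) -
            Complex.I * ((Real.sin (θ₁ - θ₂ + π) * Real.cosh (α * s) : ℝ) : ℂ)‖ := one_mul _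
      _ ≤ _ := by
          refine (norm_sub_le _ _).trans ?_
          have e1 : ‖(((Real.exp (-s) - Real.cos (θ₁ - θ₂ + π)) * Real.sinh (α * s) : ℝ) : ℂ)‖
              = |Real.exp (-s) - Real.cos (θ₁ - θ₂ + π)| * Real.sinh (|α| * s) := by
            rw [Complex.norm_real, Real.norm_eq_abs, abs_mul, Real.abs_sinh, abs_mul,
              abs_of_pos hs]
          have e2 : ‖Complex.I * ((Real.sin (θ₁ - θ₂ + π) * Real.cosh (α * s) : ℝ) : ℂ)‖
              = |Real.sin (θ₁ - θ₂ + π)| * Real.cosh (|α| * s) := by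
            rw [norm_mul, Complex.norm_I, one_mul, Complex.norm_real, Real.norm_eq_abs,
              abs_mul, abs_of_pos (Real.cosh_pos _), ← Real.cosh_abs (α * s), abs_mul,
              abs_of_pos hs]
          rw [e1, e2]

lemma AB2_f3_facts (b : ℝ) (hb : 0 ≤ b) :
    IntegrableOn (fun s => if s ≤ 1 then 6*b/(s^2+b^2) else 0) (Ioi (0:ℝ)) ∧
    ∫ s in Ioi (0:ℝ), (if s ≤ 1 then 6*b/(s^2+b^2) else 0) ≤ 6*π := by
  rcases eq_or_lt_of_le hb with h0 | h0
  · have he : (fun s : ℝ => if s ≤ 1 then 6*b/(s^2+b^2) else 0) = fun _ => 0 := by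
      funext s; rw [← h0]; simp
    rw [he]
    exact ⟨(integrableOn_const_iff (by simp)).mpr (Or.inl (by simp)), by simp; positivity⟩
  · have hint : Integrable (fun s : ℝ => 6*b/(s^2+b^2)) := by
      have h1 : Integrable (fun s : ℝ => (6/b) * (1+(s/b)^2)⁻¹) :=
        (integrable_inv_one_add_sq.comp_div h0.ne').const_mul _
      refine h1.congr ?_
      filter_upwards with s
      field_simp
      ring
    have hval : ∫ s : ℝ, 6*b/(s^2+b^2) = 6*π := by
      have h1 : ∫ s : ℝ, (6/b) * (1+(s/b)^2)⁻¹ = (6/b) * (|b| * π) := by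
        rw [integral_const_mul, MeasureTheory.Measure.integral_comp_div (fun x => (1+x^2)⁻¹) b,
          integral_univ_inv_one_add_sq, smul_eq_mul]
      have h2 : (fun s : ℝ => 6*b/(s^2+b^2)) = fun s : ℝ => (6/b) * (1+(s/b)^2)⁻¹ := by
        funext s; field_simp; ring
      rw [h2, h1, abs_of_pos h0]
      field_simp
    have hmeas : Measurable (fun s : ℝ => if s ≤ 1 then 6*b/(s^2+b^2) else 0) := by
      refine Measurable.ite (measurableSet_le measurable_id measurable_const) ?_ measurable_const
      fun_prop
    have hle : ∀ s : ℝ, ‖if s ≤ 1 then 6*b/(s^2+b^2) else 0‖ ≤ 6*b/(s^2+b^2) := by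
      intro s
      rw [Real.norm_eq_abs]
      split_ifs
      · rw [abs_of_nonneg (by positivity)]
      · simp
        positivity
    have hf3int : IntegrableOn (fun s => if s ≤ 1 then 6*b/(s^2+b^2) else 0) (Ioi (0:ℝ)) :=
      (hint.integrableOn).mono' hmeas.aestronglyMeasurable (Filter.Eventually.of_forall hle)
    refine ⟨hf3int, ?_⟩
    calc ∫ s in Ioi (0:ℝ), (if s ≤ 1 then 6*b/(s^2+b^2) else 0)
        ≤ ∫ s in Ioi (0:ℝ), 6*b/(s^2+b^2) := by
          refine integral_mono hf3int hint.integrableOn (fun s => ?_)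
          calc (if s ≤ 1 then 6*b/(s^2+b^2) else 0) ≤ ‖if s ≤ 1 then 6*b/(s^2+b^2) else 0‖ :=
                le_norm_self _
            _ ≤ 6*b/(s^2+b^2) := hle s
      _ ≤ ∫ s : ℝ, 6*b/(s^2+b^2) :=
          setIntegral_le_integral hint (Filter.Eventually.of_forall (fun s => by positivity))
      _ = 6*π := hval

lemma AB2_f1_int {a : ℝ} (ha : 0 < a) : IntegrableOn (fun s => Real.exp (-(a*s))) (Ioi (0:ℝ)) := by
  simpa [neg_mul] using exp_neg_integrableOn_Ioi 0 ha

lemma AB2_f2_int {a : ℝ} (ha0 : 0 < a) (ha1 : a < 1) :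
    IntegrableOn (fun s => (2*a*(1+s)+10) * Real.exp (-((1-a)*s))) (Ioi (0:ℝ)) := by
  set r := 1 - a with hrdef
  have hr : 0 < r := by rw [hrdef]; linarith
  set δ := r/2 with hδdef
  have hδ : 0 < δ := by positivity
  set K := 2*a*(1+1/δ)+10 with hKdef
  have hK0 : 0 < K := by positivity
  have hint : IntegrableOn (fun s => K * Real.exp (-(δ*s))) (Ioi (0:ℝ)) :=
    (AB2_f1_int hδ).const_mul K
  refine hint.mono' ?_ ?_
  · exact (Continuous.aestronglyMeasurable (by continuity))
  · rw [ae_restrict_iff' measurableSet_Ioi]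
    refine Filter.Eventually.of_forall (fun s hs => ?_)
    have hs0 : 0 < s := hs
    have h1 : 1 + s ≤ (1+1/δ) * Real.exp (δ*s) := by
      have h2 : 1 + δ*s ≤ Real.exp (δ*s) := by
        have := Real.add_one_le_exp (δ*s); linarith
      have h3 : (1:ℝ) ≤ Real.exp (δ*s) := Real.one_le_exp (by positivity)
      have h4 : s ≤ (1/δ) * Real.exp (δ*s) := by
        rw [div_mul_eq_mul_div, le_div_iff₀ hδ]
        nlinarith
      nlinarith
    have h5 : Real.exp (δ*s) * Real.exp (-(r*s)) = Real.exp (-(δ*s)) := by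
      rw [← Real.exp_add, hδdef]; ring_nf
    rw [Real.norm_eq_abs, abs_of_nonneg (by positivity)]
    calc (2*a*(1+s)+10) * Real.exp (-((1-a)*s))
        ≤ (2*a*((1+1/δ) * Real.exp (δ*s))+10*Real.exp (δ*s)) * Real.exp (-((1-a)*s)) := by
          have h6 : (1:ℝ) ≤ Real.exp (δ*s) := Real.one_le_exp (by positivity)
          have : 2*a*(1+s)+10 ≤ 2*a*((1+1/δ) * Real.exp (δ*s))+10*Real.exp (δ*s) := by nlinarith
          exact mul_le_mul_of_nonneg_right this (Real.exp_pos _).le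
      _ = K * (Real.exp (δ*s) * Real.exp (-(r*s))) := by rw [hrdef]; ring
      _ = K * Real.exp (-(δ*s)) := by rw [h5]

lemma AB2_norm_Aker_le (at' : ℝ → ℝ) (α θ₁ θ₂ : ℝ) : ‖Aker at' α θ₁ θ₂‖ ≤ 1 := by
  rw [Aker, norm_mul, norm_mul]
  have hK : ‖(1 / (4 * (π:ℂ)^2))‖ ≤ 1/2 := by
    rw [norm_div, norm_one, norm_mul, norm_pow, Complex.norm_real]
    have h4 : ‖(4:ℂ)‖ = 4 := by norm_num
    rw [h4, Real.norm_eq_abs, abs_of_pos pi_pos, div_le_div_iff₀ (by positivity) (by norm_num)]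
    nlinarith [pi_gt_three]
  have hE : ‖Complex.exp (Complex.I * ((∫ t in θ₁..θ₂, at' t : ℝ) : ℂ))‖ = 1 := by
    rw [Complex.norm_exp]; simp
  rw [hE, mul_one]
  have hS : ‖(if |θ₁ - θ₂| ∈ Set.Icc (0:ℝ) π then (1:ℂ) else 0) +
      Complex.exp (-(2 * (π:ℂ) * Complex.I * (α:ℂ))) *
        (if |θ₁ - θ₂| ∈ Set.Icc (π:ℝ) (2*π) then (1:ℂ) else 0)‖ ≤ 2 := by
    refine (norm_add_le _ _).trans ?_
    have i1 : ‖(if |θ₁ - θ₂| ∈ Set.Icc (0:ℝ) π then (1:ℂ) else 0)‖ ≤ 1 := by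
      split_ifs <;> simp
    have hE2 : ‖Complex.exp (-(2 * (π:ℂ) * Complex.I * (α:ℂ)))‖ = 1 := by
      rw [Complex.norm_exp]; simp
    rw [norm_mul, hE2, one_mul]
    have i2 : ‖(if |θ₁ - θ₂| ∈ Set.Icc (π:ℝ) (2*π) then (1:ℂ) else 0)‖ ≤ 1 := by
      split_ifs <;> simp
    linarith
  calc ‖(1 / (4 * (π:ℂ)^2))‖ * ‖_‖ ≤ (1/2) * 2 := mul_le_mul hK hS (norm_nonneg _) (by norm_num)
    _ = 1 := by norm_num

/-- If `α̃ : [0,2π] → ℝ` is Lipschitz with mean value `α ∈ (-1,1) \ {0}`, then there is `C > 0`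
such that `|A_α(θ₁,θ₂)| + ∫₀^∞ |B_α(s,θ₁,θ₂)| ds ≤ C` for all `θ₁, θ₂ ∈ [0,2π]`. -/
theorem statement2 (at' : ℝ → ℝ) (L : NNReal)
    (hLip : LipschitzOnWith L at' (Set.Icc 0 (2*π)))
    (α : ℝ) (hα : α = (1 / (2*π)) * ∫ θ in (0:ℝ)..(2*π), at' θ)
    (hα1 : α ∈ Set.Ioo (-1 : ℝ) 1) (hα0 : α ≠ 0) :
    ∃ C : ℝ, 0 < C ∧ ∀ θ₁ ∈ Set.Icc (0:ℝ) (2*π), ∀ θ₂ ∈ Set.Icc (0:ℝ) (2*π),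
      ‖Aker at' α θ₁ θ₂‖ + ∫ s in Set.Ioi (0:ℝ), ‖Bker at' α s θ₁ θ₂‖ ≤ C := by
  have ha0 : 0 < |α| := abs_pos.mpr hα0
  have ha1 : |α| < 1 := abs_lt.mpr ⟨hα1.1, hα1.2⟩
  set a := |α| with hadef
  set M₁ := ∫ s in Ioi (0:ℝ), Real.exp (-(a*s)) with hM1
  set M₂ := ∫ s in Ioi (0:ℝ), (2*a*(1+s)+10) * Real.exp (-((1-a)*s)) with hM2
  have hM1n : 0 ≤ M₁ :=
    setIntegral_nonneg measurableSet_Ioi (fun s _ => (Real.exp_pos _).le)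
  have hM2n : 0 ≤ M₂ :=
    setIntegral_nonneg measurableSet_Ioi (fun s hs => by
      have h : (0:ℝ) < s := hs
      positivity)
  refine ⟨1 + M₁ + M₂ + 6*π, by nlinarith [pi_pos], ?_⟩
  intro θ₁ _ θ₂ _
  obtain ⟨hf3int, hf3val⟩ :=
    AB2_f3_facts (Real.sqrt (2*(1 - Real.cos (θ₁ - θ₂ + π)))) (Real.sqrt_nonneg _)
  have hgint : IntegrableOn (fun s =>
      Real.exp (-(a*s)) + ((2*a*(1+s)+10) * Real.exp (-((1-a)*s)) +
        (if s ≤ 1 then 6 * Real.sqrt (2*(1 - Real.cos (θ₁ - θ₂ + π))) /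
          (s^2 + Real.sqrt (2*(1 - Real.cos (θ₁ - θ₂ + π)))^2) else 0))) (Ioi (0:ℝ)) :=
    (AB2_f1_int ha0).add ((AB2_f2_int ha0 ha1).add hf3int)
  have hptwise : ∀ s ∈ Ioi (0:ℝ), ‖Bker at' α s θ₁ θ₂‖ ≤
      Real.exp (-(a*s)) + ((2*a*(1+s)+10) * Real.exp (-((1-a)*s)) +
        (if s ≤ 1 then 6 * Real.sqrt (2*(1 - Real.cos (θ₁ - θ₂ + π))) /
          (s^2 + Real.sqrt (2*(1 - Real.cos (θ₁ - θ₂ + π)))^2) else 0)) := by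
    intro s hs
    have hs0 : (0:ℝ) < s := hs
    have h1 := AB2_norm_Bker_le at' α s θ₁ θ₂ hs0
    have h2 := AB2_real_bound a s (θ₁ - θ₂ + π) ha0 ha1 hs0
    rw [hadef] at *
    linarith
  have hBle : ∫ s in Ioi (0:ℝ), ‖Bker at' α s θ₁ θ₂‖ ≤
      ∫ s in Ioi (0:ℝ), (Real.exp (-(a*s)) + ((2*a*(1+s)+10) * Real.exp (-((1-a)*s)) +
        (if s ≤ 1 then 6 * Real.sqrt (2*(1 - Real.cos (θ₁ - θ₂ + π))) /
          (s^2 + Real.sqrt (2*(1 - Real.cos (θ₁ - θ₂ + π)))^2) else 0))) :=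
    integral_mono_of_nonneg (Filter.Eventually.of_forall (fun s => norm_nonneg _)) hgint
      ((ae_restrict_iff' measurableSet_Ioi).mpr (Filter.Eventually.of_forall hptwise))
  have hgval : ∫ s in Ioi (0:ℝ), (Real.exp (-(a*s)) + ((2*a*(1+s)+10) * Real.exp (-((1-a)*s)) +
        (if s ≤ 1 then 6 * Real.sqrt (2*(1 - Real.cos (θ₁ - θ₂ + π))) /
          (s^2 + Real.sqrt (2*(1 - Real.cos (θ₁ - θ₂ + π)))^2) else 0)))
      = M₁ + (M₂ + ∫ s in Ioi (0:ℝ), (if s ≤ 1 then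
          6 * Real.sqrt (2*(1 - Real.cos (θ₁ - θ₂ + π))) /
          (s^2 + Real.sqrt (2*(1 - Real.cos (θ₁ - θ₂ + π)))^2) else 0)) := by
    have h23 : IntegrableOn (fun s => (2*a*(1+s)+10) * Real.exp (-((1-a)*s)) +
        (if s ≤ 1 then 6 * Real.sqrt (2*(1 - Real.cos (θ₁ - θ₂ + π))) /
          (s^2 + Real.sqrt (2*(1 - Real.cos (θ₁ - θ₂ + π)))^2) else 0)) (Ioi (0:ℝ)) :=
      (AB2_f2_int ha0 ha1).add hf3int
    rw [integral_add (AB2_f1_int ha0) h23, integral_add (AB2_f2_int ha0 ha1) hf3int]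
  have hA := AB2_norm_Aker_le at' α θ₁ θ₂
  have h6 : (6:ℝ) * Real.sqrt (2*(1 - Real.cos (θ₁ - θ₂ + π))) = 6 * Real.sqrt (2*(1 - Real.cos (θ₁ - θ₂ + π))) := rfl
  linarith [hf3val, hBle, hgval.le, hgval.ge]
end

section
/- Let M > 0, let E ⊆ ℝ² be measurable with finite Lebesgue measure |E|, and let g_j : ℝ² → ℂ (j = 0, 1, 2, ...) be measurable functions satisfying ‖g_j‖_{L^∞} ≤ M 2^{−j/2} |E|, ‖g_j‖_{L^2} ≤ M 2^{j/2} |E|^{5/6}, and ‖g_j‖_{L^6} ≤ M 2^{j/2} |E|^{1/2} for every j ≥ 0. Suppose g : ℝ² → ℂ is measurable with |g(x)| ≤ Σ_{j≥0} |g_j(x)| for a.e. x. Then there is an absolute constant C such that for every σ > 0, writing A_σ := {x ∈ ℝ² : |g(x)| > σ}: σ |A_σ|^{1/4} ≤ C M |E|^{11/12} and σ |A_σ|^{1/12} ≤ C M |E|^{3/4}. -/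
open MeasureTheory Real Set
open scoped ENNReal

lemma st7_final {A : Set ℂ} {V : ℝ≥0∞} {σ M : ℝ} (hσ : 0 < σ) (hM : 0 < M)
    {k w : ℝ} (hk : 0 < k)
    (h : volume A ≤ ENNReal.ofReal ((16*M/σ)^k) * V ^ (k*w)) :
    ENNReal.ofReal σ * volume A ^ k⁻¹ ≤ ENNReal.ofReal (16*M) * V ^ w := by
  have hq : (0:ℝ) < 16*M/σ := by positivity
  have h2 : volume A ^ k⁻¹ ≤ (ENNReal.ofReal ((16*M/σ)^k) * V ^ (k*w)) ^ k⁻¹ :=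
    ENNReal.rpow_le_rpow h (by positivity)
  rw [ENNReal.mul_rpow_of_nonneg _ _ (by positivity), ← ENNReal.rpow_mul,
    ENNReal.ofReal_rpow_of_pos (by positivity), ← Real.rpow_mul hq.le,
    mul_inv_cancel₀ hk.ne', Real.rpow_one,
    show k*w*k⁻¹ = w by field_simp] at h2
  calc ENNReal.ofReal σ * volume A ^ k⁻¹
      ≤ ENNReal.ofReal σ * (ENNReal.ofReal (16*M/σ) * V ^ w) := by
        exact mul_le_mul_right h2 _
    _ = ENNReal.ofReal (16*M) * V ^ w := by
        rw [← mul_assoc, ← ENNReal.ofReal_mul hσ.le,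
          show σ * (16*M/σ) = 16*M by field_simp]

lemma st7_cheb {S : ℂ → ℝ} (hS : AEStronglyMeasurable S (volume : Measure ℂ))
    (n : ℕ) (hn : 1 ≤ n) {σ B : ℝ} (hσ : 0 < σ) (hB : 0 < B)
    {W : ℝ≥0∞} (hW : eLpNorm S (n : ℝ≥0∞) volume ≤ ENNReal.ofReal B * W) :
    volume {x : ℂ | σ/2 < S x} ≤
      ENNReal.ofReal (((σ/2)⁻¹*B)^(n:ℝ)) * W ^ (n:ℝ) := by
  have h2σ : (0:ℝ) < σ/2 := by positivity
  have hn0 : (n : ℝ≥0∞) ≠ 0 := by exact_mod_cast Nat.one_le_iff_ne_zero.mp hn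
  have hnt : (n : ℝ≥0∞) ≠ ∞ := ENNReal.natCast_ne_top n
  have hε : ENNReal.ofReal (σ/2) ≠ 0 := by
    simp [ENNReal.ofReal_eq_zero, not_le, h2σ]
  have hsub : {x : ℂ | σ/2 < S x} ⊆ {x : ℂ | ENNReal.ofReal (σ/2) ≤ (‖S x‖₊ : ℝ≥0∞)} := by
    intro x hx
    simp only [mem_setOf_eq] at hx ⊢
    calc ENNReal.ofReal (σ/2) ≤ ENNReal.ofReal ‖S x‖ :=
          ENNReal.ofReal_le_ofReal (le_trans hx.le (le_abs_self _))
      _ = (‖S x‖₊ : ℝ≥0∞) := ofReal_norm _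
  have hcheb := meas_ge_le_mul_pow_eLpNorm_enorm (volume : Measure ℂ) hn0 hnt hS hε (by simp)
  rw [ENNReal.toReal_natCast] at hcheb
  calc volume {x : ℂ | σ/2 < S x}
      ≤ volume {x : ℂ | ENNReal.ofReal (σ/2) ≤ (‖S x‖₊ : ℝ≥0∞)} := measure_mono hsub
    _ ≤ (ENNReal.ofReal (σ/2))⁻¹ ^ (n:ℝ) * eLpNorm S (n:ℝ≥0∞) volume ^ (n:ℝ) := hcheb
    _ ≤ (ENNReal.ofReal (σ/2))⁻¹ ^ (n:ℝ) * (ENNReal.ofReal B * W) ^ (n:ℝ) :=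
        mul_le_mul_right (ENNReal.rpow_le_rpow hW (by positivity)) _
    _ = ENNReal.ofReal (((σ/2)⁻¹*B)^(n:ℝ)) * W ^ (n:ℝ) := by
        rw [← ENNReal.ofReal_inv_of_pos h2σ,
          ENNReal.mul_rpow_of_nonneg _ _ (by positivity : (0:ℝ) ≤ (n:ℝ)), ← mul_assoc,
          ENNReal.ofReal_rpow_of_pos (by positivity), ENNReal.ofReal_rpow_of_pos hB,
          ← ENNReal.ofReal_mul (by positivity), ← Real.mul_rpow (by positivity) hB.le]

set_option maxHeartbeats 1000000 in
/-- There is an absolute constant `C` such that: whenever `E ⊆ ℝ²` has finite measure,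
`g_j` satisfy `‖g_j‖_∞ ≤ M 2^{-j/2}|E|`, `‖g_j‖_2 ≤ M 2^{j/2}|E|^{5/6}`,
`‖g_j‖_6 ≤ M 2^{j/2}|E|^{1/2}`, and `|g| ≤ Σ_j |g_j|` a.e., then for every `σ > 0`,
with `A_σ = {|g| > σ}`, one has `σ |A_σ|^{1/4} ≤ C M |E|^{11/12}` and
`σ |A_σ|^{1/12} ≤ C M |E|^{3/4}`. (`ℝ²` is realized as `ℂ`.) -/
theorem statement7 :
    ∃ C : ℝ, 0 < C ∧
      ∀ M : ℝ, 0 < M → ∀ E : Set ℂ, MeasurableSet E → volume E < ⊤ →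
      ∀ gj : ℕ → ℂ → ℂ, (∀ j, Measurable (gj j)) →
      (∀ j : ℕ, eLpNorm (gj j) ⊤ volume ≤
          ENNReal.ofReal (M * (2:ℝ) ^ (-(j:ℝ)/2)) * volume E) →
      (∀ j : ℕ, eLpNorm (gj j) 2 volume ≤
          ENNReal.ofReal (M * (2:ℝ) ^ ((j:ℝ)/2)) * volume E ^ (5/6 : ℝ)) →
      (∀ j : ℕ, eLpNorm (gj j) 6 volume ≤
          ENNReal.ofReal (M * (2:ℝ) ^ ((j:ℝ)/2)) * volume E ^ (1/2 : ℝ)) →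
      ∀ g : ℂ → ℂ, Measurable g → (∀ᵐ x : ℂ, ‖g x‖ ≤ ∑' j : ℕ, ‖gj j x‖) →
      ∀ σ : ℝ, 0 < σ →
        ENNReal.ofReal σ * volume {x : ℂ | σ < ‖g x‖} ^ (1/4 : ℝ) ≤
            ENNReal.ofReal (C * M) * volume E ^ (11/12 : ℝ) ∧
        ENNReal.ofReal σ * volume {x : ℂ | σ < ‖g x‖} ^ (1/12 : ℝ) ≤
            ENNReal.ofReal (C * M) * volume E ^ (3/4 : ℝ) := by
  refine ⟨16, by norm_num, ?_⟩
  intro M hM E hE hEfin gj hgjm hTop h2 h6 g hgm hgle σ hσ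
  set V : ℝ≥0∞ := volume E with hV
  set e : ℝ := V.toReal with hedef
  have he0 : 0 ≤ e := ENNReal.toReal_nonneg
  have hVt : V ≠ ⊤ := hEfin.ne
  -- geometric ratio q = 2^{-1/2}
  set q : ℝ := (2:ℝ) ^ (-(1/2:ℝ)) with hqdef
  have hq0 : 0 < q := Real.rpow_pos_of_pos two_pos _
  have hqsq : q ^ (2:ℕ) = 1/2 := by
    rw [hqdef, ← Real.rpow_natCast ((2:ℝ) ^ (-(1/2:ℝ))) 2, ← Real.rpow_mul (by norm_num)]
    norm_num
  have hq34 : q ≤ 3/4 := by nlinarith [hqsq, hq0]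
  have hq1 : q < 1 := lt_of_le_of_lt hq34 (by norm_num)
  have hinv : (1-q)⁻¹ ≤ 4 := by
    rw [show (4:ℝ) = (1/4)⁻¹ by norm_num]
    exact inv_anti₀ (by norm_num) (by linarith)
  have hqj : ∀ j : ℕ, (2:ℝ) ^ (-(j:ℝ)/2) = q ^ j := by
    intro j
    rw [hqdef, ← Real.rpow_natCast ((2:ℝ) ^ (-(1/2:ℝ))) j, ← Real.rpow_mul (by norm_num)]
    ring_nf
  -- s = 2^{1/2}
  set s : ℝ := (2:ℝ) ^ ((1/2:ℝ)) with hsdef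
  have hs0 : 0 < s := Real.rpow_pos_of_pos two_pos _
  have hssq : s ^ (2:ℕ) = 2 := by
    rw [hsdef, ← Real.rpow_natCast ((2:ℝ) ^ ((1/2:ℝ))) 2, ← Real.rpow_mul (by norm_num)]
    norm_num
  have hs54 : 5/4 ≤ s := by nlinarith [hssq, hs0]
  have hsj : ∀ j : ℕ, (2:ℝ) ^ ((j:ℝ)/2) = s ^ j := by
    intro j
    rw [hsdef, ← Real.rpow_natCast ((2:ℝ) ^ ((1/2:ℝ))) j, ← Real.rpow_mul (by norm_num)]
    ring_nf
  -- pointwise a.e. bounds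
  have hpt : ∀ j : ℕ, ∀ᵐ x : ℂ, ‖gj j x‖ ≤ M * q ^ j * e := by
    intro j
    have hb := hTop j
    rw [eLpNorm_exponent_top] at hb
    filter_upwards [ae_le_eLpNormEssSup (f := gj j) (μ := (volume : Measure ℂ))] with x hx
    have hx2 : (‖gj j x‖₊ : ℝ≥0∞) ≤ ENNReal.ofReal (M * (2:ℝ) ^ (-(j:ℝ)/2)) * V :=
      le_trans hx hb
    have hfin : ENNReal.ofReal (M * (2:ℝ) ^ (-(j:ℝ)/2)) * V ≠ ⊤ :=
      ENNReal.mul_ne_top ENNReal.ofReal_ne_top hVt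
    have := ENNReal.toReal_mono hfin hx2
    rw [ENNReal.coe_toReal, coe_nnnorm, ENNReal.toReal_mul,
      ENNReal.toReal_ofReal (by positivity)] at this
    rwa [hqj j] at this
  have hptall : ∀ᵐ x : ℂ, ∀ j : ℕ, ‖gj j x‖ ≤ M * q ^ j * e := ae_all_iff.2 hpt
  have hc : Summable (fun j : ℕ => M * q ^ j * e) := by
    have : (fun j : ℕ => M * q ^ j * e) = fun j : ℕ => (M * e) * q ^ j := by
      funext j; ring
    rw [this]
    exact (summable_geometric_of_lt_one hq0.le hq1).mul_left _
  have htsum : ∑' j : ℕ, M * q ^ j * e = M * e * (1-q)⁻¹ := by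
    have : (fun j : ℕ => M * q ^ j * e) = fun j : ℕ => (M * e) * q ^ j := by
      funext j; ring
    rw [this, tsum_mul_left, tsum_geometric_of_lt_one hq0.le hq1]
  by_cases hT : 8 * M * e ≤ σ
  · -- trivial branch: A is null
    have hnull : volume {x : ℂ | σ < ‖g x‖} = 0 := by
      have hae : ∀ᵐ x : ℂ, ‖g x‖ ≤ σ := by
        filter_upwards [hgle, hptall] with x hx hxj
        have hsumx : Summable (fun j : ℕ => ‖gj j x‖) :=
          Summable.of_nonneg_of_le (fun j => norm_nonneg _) hxj hc
        have h1 : ∑' j : ℕ, ‖gj j x‖ ≤ ∑' j : ℕ, M * q ^ j * e :=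
          Summable.tsum_le_tsum hxj hsumx hc
        have h2' : M * e * (1-q)⁻¹ ≤ M * e * 4 :=
          mul_le_mul_of_nonneg_left hinv (by positivity)
        rw [htsum] at h1
        linarith
      have := ae_iff.mp hae
      simpa [not_le] using this
    rw [hnull]
    constructor <;>
      · rw [ENNReal.zero_rpow_of_pos (by norm_num), mul_zero]
        exact zero_le
  · -- main branch
    push_neg at hT
    have hMe : 0 < M * e := by nlinarith
    have he : 0 < e := by nlinarith
    have hV0 : V ≠ 0 := by
      intro h0
      rw [hedef, h0] at he; simp at he
    set T : ℝ := 8 * M * e / σ with hTdef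
    have hT0 : 0 < T := by positivity
    have hT1 : 1 < T := (one_lt_div hσ).2 hT
    set J : ℕ := ⌈2 * Real.logb 2 T⌉₊ with hJdef
    have hJl : T ≤ (2:ℝ) ^ ((J:ℝ)/2) := by
      have h1 : 2 * Real.logb 2 T ≤ (J:ℝ) := Nat.le_ceil _
      calc T = (2:ℝ) ^ (Real.logb 2 T) := (Real.rpow_logb two_pos (by norm_num) hT0).symm
        _ ≤ (2:ℝ) ^ ((J:ℝ)/2) := (Real.rpow_le_rpow_left_iff one_lt_two).2 (by linarith)
    have hJu : (2:ℝ) ^ ((J:ℝ)/2) ≤ 2 * T := by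
      have hlogpos : 0 ≤ 2 * Real.logb 2 T := by
        have := Real.logb_pos one_lt_two hT1; linarith
      have h2' : (J:ℝ) < 2 * Real.logb 2 T + 1 := Nat.ceil_lt_add_one hlogpos
      calc (2:ℝ) ^ ((J:ℝ)/2) ≤ (2:ℝ) ^ (Real.logb 2 T + 1/2) :=
            (Real.rpow_le_rpow_left_iff one_lt_two).2 (by linarith)
        _ = T * (2:ℝ) ^ ((1/2:ℝ)) := by
            rw [Real.rpow_add two_pos, Real.rpow_logb two_pos (by norm_num) hT0]
        _ ≤ T * 2 := by
            have : (2:ℝ) ^ ((1/2:ℝ)) ≤ (2:ℝ) ^ ((1:ℝ)) :=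
              (Real.rpow_le_rpow_left_iff one_lt_two).2 (by norm_num)
            rw [Real.rpow_one] at this
            exact mul_le_mul_of_nonneg_left this hT0.le
        _ = 2 * T := by ring
    have hqJ : q ^ J ≤ T⁻¹ := by
      have : q ^ J = ((2:ℝ) ^ ((J:ℝ)/2))⁻¹ := by
        rw [← hqj J, ← Real.rpow_neg (by norm_num)]
        ring_nf
      rw [this]
      exact inv_anti₀ hT0 hJl
    -- tail bound
    have htailr : ∑' k : ℕ, M * q ^ (k + J) * e ≤ σ / 2 := by
      have hf : (fun k : ℕ => M * q ^ (k + J) * e) = fun k : ℕ => (M * e * q ^ J) * q ^ k := by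
        funext k; rw [pow_add]; ring
      rw [hf, tsum_mul_left, tsum_geometric_of_lt_one hq0.le hq1]
      have hb1 : M * e * q ^ J * (1-q)⁻¹ ≤ M * e * T⁻¹ * 4 := by
        have h1q : 0 ≤ (1-q)⁻¹ := inv_nonneg.2 (by linarith)
        have hpow : 0 ≤ q ^ J := by positivity
        have := mul_le_mul (mul_le_mul_of_nonneg_left hqJ (by positivity : (0:ℝ) ≤ M * e))
          hinv h1q (by positivity : (0:ℝ) ≤ M * e * T⁻¹)
        linarith [this]
      have heq : M * e * T⁻¹ * 4 = σ / 2 := by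
        rw [hTdef]
        field_simp
        ring
      linarith [hb1, heq.le]
    -- a.e. inclusion
    have hae : ∀ᵐ x : ℂ, σ < ‖g x‖ → σ/2 < ∑ j ∈ Finset.range J, ‖gj j x‖ := by
      filter_upwards [hgle, hptall] with x hx hxj
      intro hσx
      have hsumx : Summable (fun j : ℕ => ‖gj j x‖) :=
        Summable.of_nonneg_of_le (fun j => norm_nonneg _) hxj hc
      have hsplit := Summable.sum_add_tsum_nat_add (f := fun j : ℕ => ‖gj j x‖) J hsumx
      have htail2 : ∑' k : ℕ, ‖gj (k + J) x‖ ≤ σ / 2 := by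
        refine le_trans (Summable.tsum_le_tsum (fun k => hxj (k + J))
          ((summable_nat_add_iff J).2 hsumx) ((summable_nat_add_iff J).2 hc)) htailr
      have : ‖g x‖ ≤ (∑ j ∈ Finset.range J, ‖gj j x‖) + σ/2 := by
        calc ‖g x‖ ≤ ∑' j : ℕ, ‖gj j x‖ := hx
          _ = (∑ j ∈ Finset.range J, ‖gj j x‖) + ∑' k : ℕ, ‖gj (k + J) x‖ := hsplit.symm
          _ ≤ (∑ j ∈ Finset.range J, ‖gj j x‖) + σ/2 := by linarith
      linarith
    set S : ℂ → ℝ := fun x => ∑ j ∈ Finset.range J, ‖gj j x‖ with hSdef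
    have hSm : Measurable S := Finset.measurable_sum _ (fun i _ => (hgjm i).norm)
    have hAsub : volume {x : ℂ | σ < ‖g x‖} ≤ volume {x : ℂ | σ/2 < S x} := by
      apply measure_mono_ae
      filter_upwards [hae] with x hx
      exact hx
    -- geometric sum bound
    have hgeo : ∑ j ∈ Finset.range J, (2:ℝ) ^ ((j:ℝ)/2) ≤ 64 * M * e / σ := by
      have h1 : ∑ j ∈ Finset.range J, (2:ℝ) ^ ((j:ℝ)/2) = ∑ j ∈ Finset.range J, s ^ j := by
        exact Finset.sum_congr rfl (fun j _ => hsj j)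
      have h2' : ∑ j ∈ Finset.range J, s ^ j = (s ^ J - 1) / (s - 1) :=
        geom_sum_eq (by nlinarith) J
      have h3 : (s ^ J - 1) / (s - 1) ≤ 4 * s ^ J := by
        rw [div_le_iff₀ (by linarith : (0:ℝ) < s - 1)]
        nlinarith [pow_pos hs0 J]
      have h4 : s ^ J ≤ 2 * T := by rw [← hsj J]; exact hJu
      have h5 : 4 * (2 * T) = 64 * M * e / σ := by
        rw [hTdef]; ring
      rw [h1, h2']
      nlinarith
    -- eLpNorm bound for S
    have hkey : ∀ (n : ℕ), 1 ≤ n → ∀ r : ℝ,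
        (∀ j : ℕ, eLpNorm (gj j) (n:ℝ≥0∞) volume ≤
          ENNReal.ofReal (M * (2:ℝ) ^ ((j:ℝ)/2)) * V ^ r) →
        volume {x : ℂ | σ < ‖g x‖} ≤
          ENNReal.ofReal ((((σ/2)⁻¹) * (64 * M^2 * e / σ))^(n:ℝ)) * V ^ (r * (n:ℝ)) := by
      intro n hn r hLp
      have hB : (0:ℝ) < 64 * M^2 * e / σ := by positivity
      have hnorm : eLpNorm S (n:ℝ≥0∞) volume ≤
          ENNReal.ofReal (64 * M^2 * e / σ) * V ^ r := by
        have hfun : S = ∑ j ∈ Finset.range J, (fun x => ‖gj j x‖) := by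
          funext x
          rw [hSdef, Finset.sum_apply]
        calc eLpNorm S (n:ℝ≥0∞) volume
            ≤ ∑ j ∈ Finset.range J, eLpNorm (fun x => ‖gj j x‖) (n:ℝ≥0∞) volume := by
              rw [hfun]
              exact eLpNorm_sum_le
                (fun i _ => ((hgjm i).norm).aestronglyMeasurable)
                (by exact_mod_cast hn)
          _ = ∑ j ∈ Finset.range J, eLpNorm (gj j) (n:ℝ≥0∞) volume := by
              exact Finset.sum_congr rfl (fun j _ => eLpNorm_norm (gj j))
          _ ≤ ∑ j ∈ Finset.range J, ENNReal.ofReal (M * (2:ℝ) ^ ((j:ℝ)/2)) * V ^ r :=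
              Finset.sum_le_sum (fun j _ => hLp j)
          _ = ENNReal.ofReal (∑ j ∈ Finset.range J, M * (2:ℝ) ^ ((j:ℝ)/2)) * V ^ r := by
              rw [← Finset.sum_mul, ENNReal.ofReal_sum_of_nonneg
                (fun j _ => by positivity)]
          _ ≤ ENNReal.ofReal (64 * M^2 * e / σ) * V ^ r := by
              apply mul_le_mul_left
              apply ENNReal.ofReal_le_ofReal
              rw [← Finset.mul_sum]
              calc M * ∑ j ∈ Finset.range J, (2:ℝ) ^ ((j:ℝ)/2)
                  ≤ M * (64 * M * e / σ) := mul_le_mul_of_nonneg_left hgeo hM.le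
                _ = 64 * M^2 * e / σ := by ring
      have := st7_cheb hSm.aestronglyMeasurable n hn hσ hB (W := V ^ r) hnorm
      rw [← ENNReal.rpow_mul] at this
      exact le_trans hAsub this
    have hVe : ENNReal.ofReal e = V := ENNReal.ofReal_toReal hVt
    set D : ℝ := (σ/2)⁻¹ * (64 * M^2 * e / σ) with hDdef
    have hD0 : 0 < D := by rw [hDdef]; positivity
    constructor
    · -- first bound: p=2, r=5/6
      have key2 := hkey 2 (by norm_num) (5/6) (by exact_mod_cast h2)
      have hD2 : D ^ ((2:ℕ):ℝ) ≤ (16*M/σ)^((4:ℝ)) * e^(2:ℕ) := by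
        rw [Real.rpow_natCast D 2, show (4:ℝ) = ((4:ℕ):ℝ) by norm_num,
          Real.rpow_natCast (16*M/σ) 4]
        have hDeq : D = 128 * M^2 * e / σ^2 := by rw [hDdef]; field_simp; ring
        rw [hDeq]
        have e1 : (128 * M^2 * e / σ^2)^(2:ℕ) = 16384 * (M^4 * e^2 / σ^4) := by ring
        have e2 : (16*M/σ)^(4:ℕ) * e^(2:ℕ) = 65536 * (M^4 * e^2 / σ^4) := by ring
        rw [e1, e2]
        have : (0:ℝ) ≤ M^4 * e^2 / σ^4 := by positivity
        linarith
      have hchain : volume {x : ℂ | σ < ‖g x‖} ≤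
          ENNReal.ofReal ((16*M/σ)^(4:ℝ)) * V ^ ((4:ℝ) * (11/12)) := by
        calc volume {x : ℂ | σ < ‖g x‖}
            ≤ ENNReal.ofReal (D^((2:ℕ):ℝ)) * V ^ ((5/6) * ((2:ℕ):ℝ)) := by
              exact_mod_cast key2
          _ ≤ ENNReal.ofReal ((16*M/σ)^(4:ℝ) * e^(2:ℕ)) * V ^ ((5/6) * ((2:ℕ):ℝ)) :=
              mul_le_mul_left (ENNReal.ofReal_le_ofReal hD2) _
          _ = ENNReal.ofReal ((16*M/σ)^(4:ℝ)) * V ^ ((4:ℝ) * (11/12)) := by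
              rw [ENNReal.ofReal_mul (by positivity), ENNReal.ofReal_pow he0, hVe,
                mul_assoc]
              congr 1
              rw [← ENNReal.rpow_natCast V 2, ← ENNReal.rpow_add _ _ hV0 hVt]
              norm_num
      have := st7_final hσ hM (k := 4) (w := 11/12) (by norm_num) hchain
      rw [show ((4:ℝ))⁻¹ = (1/4:ℝ) by norm_num] at this
      exact this
    · -- second bound: p=6, r=1/2
      have key6 := hkey 6 (by norm_num) (1/2) (by exact_mod_cast h6)
      have hD6 : D ^ ((6:ℕ):ℝ) ≤ (16*M/σ)^((12:ℝ)) * e^(6:ℕ) := by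
        rw [Real.rpow_natCast D 6, show (12:ℝ) = ((12:ℕ):ℝ) by norm_num,
          Real.rpow_natCast (16*M/σ) 12]
        have hDeq : D = 128 * M^2 * e / σ^2 := by rw [hDdef]; field_simp; ring
        rw [hDeq]
        have e1 : (128 * M^2 * e / σ^2)^(6:ℕ) = 4398046511104 * (M^12 * e^6 / σ^12) := by
          ring
        have e2 : (16*M/σ)^(12:ℕ) * e^(6:ℕ) = 281474976710656 * (M^12 * e^6 / σ^12) := by
          ring
        rw [e1, e2]
        have : (0:ℝ) ≤ M^12 * e^6 / σ^12 := by positivity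
        linarith
      have hchain : volume {x : ℂ | σ < ‖g x‖} ≤
          ENNReal.ofReal ((16*M/σ)^(12:ℝ)) * V ^ ((12:ℝ) * (3/4)) := by
        calc volume {x : ℂ | σ < ‖g x‖}
            ≤ ENNReal.ofReal (D^((6:ℕ):ℝ)) * V ^ ((1/2) * ((6:ℕ):ℝ)) := by
              exact_mod_cast key6
          _ ≤ ENNReal.ofReal ((16*M/σ)^(12:ℝ) * e^(6:ℕ)) * V ^ ((1/2) * ((6:ℕ):ℝ)) :=
              mul_le_mul_left (ENNReal.ofReal_le_ofReal hD6) _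
          _ = ENNReal.ofReal ((16*M/σ)^(12:ℝ)) * V ^ ((12:ℝ) * (3/4)) := by
              rw [ENNReal.ofReal_mul (by positivity), ENNReal.ofReal_pow he0, hVe,
                mul_assoc]
              congr 1
              rw [← ENNReal.rpow_natCast V 6, ← ENNReal.rpow_add _ _ hV0 hVt]
              norm_num
      have := st7_final hσ hM (k := 12) (w := 3/4) (by norm_num) hchain
      rw [show ((12:ℝ))⁻¹ = (1/12:ℝ) by norm_num] at this
      exact this
end

section
/- There exists a constant C > 0 such that for all s ∈ (0,1], all b ∈ [0,2], all α ∈ [−1,1], and k ∈ {0,1}: | ∂_s^k ( cosh(αs) / (2 sinh²(s/2) + b²) − 1 / (s²/2 + b²) ) | ≤ C / (s² + b²). -/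
open Real Set

lemma sinh_le_add_cube {x : ℝ} (h0 : 0 ≤ x) (h1 : x ≤ 1) :
    Real.sinh x ≤ x + x^3 := by
  have hb1 := Real.exp_bound (x := x) (by rw [abs_of_nonneg h0]; exact h1) (n := 3) (by norm_num)
  have hb2 := Real.exp_bound (x := -x) (by rw [abs_neg, abs_of_nonneg h0]; exact h1) (n := 3) (by norm_num)
  rw [abs_of_nonneg h0] at hb1
  rw [abs_neg, abs_of_nonneg h0] at hb2
  simp [Finset.sum_range_succ] at hb1 hb2
  rw [Real.sinh_eq]
  rw [abs_le] at hb1 hb2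
  norm_num [Nat.factorial] at hb1 hb2
  linarith [pow_nonneg h0 3]

lemma cosh_eq_one_add (x : ℝ) : Real.cosh x = 1 + 2 * Real.sinh (x/2)^2 := by
  have h1 := Real.cosh_two_mul (x/2)
  have h2 := Real.cosh_sq (x/2)
  rw [show 2*(x/2) = x by ring] at h1
  linarith

lemma hasDeriv_main (b α s : ℝ) (h1 : 0 < 2*Real.sinh (s/2)^2 + b^2)
    (h2 : 0 < s^2/2 + b^2) :
    HasDerivAt (fun t : ℝ => Real.cosh (α*t) / (2*Real.sinh (t/2)^2 + b^2) - 1/(t^2/2+b^2))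
      ((α * Real.sinh (α*s) * (2*Real.sinh (s/2)^2+b^2)
          - Real.cosh (α*s) * Real.sinh s) / (2*Real.sinh (s/2)^2+b^2)^2
        + s / (s^2/2+b^2)^2) s := by
  have hA : HasDerivAt (fun t : ℝ => α * t) α s := by
    simpa using (hasDerivAt_id s).const_mul α
  have hcosh : HasDerivAt (fun t : ℝ => Real.cosh (α*t)) (Real.sinh (α*s) * α) s :=
    (Real.hasDerivAt_cosh (α*s)).comp s hA
  have hhalf : HasDerivAt (fun t : ℝ => t/2) (1/2) s := (hasDerivAt_id s).div_const 2
  have hsinh2 : HasDerivAt (fun t : ℝ => Real.sinh (t/2)) (Real.cosh (s/2) * (1/2)) s :=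
    by have := (Real.hasDerivAt_sinh (s/2)).comp s hhalf; exact this
  have hpow := hsinh2.pow 2
  have hden := (hpow.const_mul 2).add_const (b^2)
  have hq1 := hcosh.div hden h1.ne'
  have hden2 := ((hasDerivAt_pow 2 s).div_const 2).add_const (b^2)
  have hq2 := (hasDerivAt_const s (1:ℝ)).div hden2 h2.ne'
  have := hq1.sub hq2
  convert this using 1
  case e'_4 => rfl
  case e'_5 => rfl
  case e'_8 => rfl
  have hs2 : Real.sinh s = 2 * Real.sinh (s/2) * Real.cosh (s/2) := by
    rw [show s = 2*(s/2) by ring, Real.sinh_two_mul]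
    ring_nf
  rw [hs2]
  simp only [Pi.pow_apply]
  field_simp
  ring

set_option maxHeartbeats 1000000 in
/-- There is `C > 0` such that for all `s ∈ (0,1]`, `b ∈ [0,2]`, `α ∈ [-1,1]` and `k ∈ {0,1}`,
`|∂_s^k ( cosh(αs)/(2 sinh²(s/2) + b²) − 1/(s²/2 + b²) )| ≤ C/(s² + b²)`. -/
theorem statement16 :
    ∃ C : ℝ, 0 < C ∧ ∀ s ∈ Set.Ioc (0:ℝ) 1, ∀ b ∈ Set.Icc (0:ℝ) 2,
      ∀ α ∈ Set.Icc (-1:ℝ) 1,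
      |Real.cosh (α * s) / (2 * Real.sinh (s/2)^2 + b^2) - 1 / (s^2/2 + b^2)| ≤
          C / (s^2 + b^2) ∧
      |deriv (fun t : ℝ =>
            Real.cosh (α * t) / (2 * Real.sinh (t/2)^2 + b^2) - 1 / (t^2/2 + b^2)) s| ≤
          C / (s^2 + b^2) := by
  refine ⟨1000, by norm_num, ?_⟩
  rintro s ⟨hs0, hs1⟩ b ⟨hb0, hb2⟩ α ⟨hα1, hα2⟩
  have hD1pos' : 0 < 2*Real.sinh (s/2)^2 + b^2 := by
    have : 0 < Real.sinh (s/2) := Real.sinh_pos_iff.2 (by linarith)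
    positivity
  have hD2pos' : 0 < s^2/2 + b^2 := by positivity
  -- notation
  set x := Real.sinh (s/2) with hxdef
  set c := Real.cosh (α*s) with hcdef
  set sa := Real.sinh (α*s) with hsadef
  set S := Real.sinh s with hSdef
  set D1 := 2*x^2 + b^2 with hD1def
  set D2 := s^2/2 + b^2 with hD2def
  set u := s^2 + b^2 with hudef
  have hxpos : 0 < x := Real.sinh_pos_iff.2 (by linarith)
  have hx_lb : s/2 ≤ x := Real.self_le_sinh_iff.2 (by linarith)
  have hx_ub : x ≤ s/2 + (s/2)^3 := sinh_le_add_cube (by linarith) (by linarith)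
  have hA0 : (0:ℝ) ≤ s/2 + (s/2)^3 := by linarith [pow_nonneg hs0.le 3]
  have hs21 : s^2 ≤ 1 := by linarith [mul_le_mul hs1 hs1 hs0.le zero_le_one]
  have h42 : s^4 ≤ s^2 := by linarith [mul_nonneg (sub_nonneg.2 hs21) (sq_nonneg s)]
  have hs41 : s^4 ≤ 1 := by linarith
  have h62 : s^6 ≤ s^2 := by linarith [mul_nonneg (sub_nonneg.2 hs41) (sq_nonneg s)]
  have h64 : s^6 ≤ s^4 := by linarith [mul_nonneg (sub_nonneg.2 hs21) (pow_nonneg hs0.le 4)]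
  have hs32 : s^3 ≤ s := by
    linarith [mul_le_mul_of_nonneg_left hs21 hs0.le]
  have hxx := mul_le_mul hx_ub hx_ub hxpos.le hA0
  have hupos : 0 < u := by positivity
  have hD1pos : 0 < D1 := hD1pos'
  have hD2pos : 0 < D2 := hD2pos'
  have hc0 : 1 ≤ c := Real.one_le_cosh _
  have hα : |α| ≤ 1 := abs_le.2 ⟨hα1, hα2⟩
  have hc1 : c ≤ 1 + s^2 := by
    have h := cosh_eq_one_add (α*s)
    have habs : |Real.sinh (α*s/2)| ≤ x := by
      rw [Real.abs_sinh, hxdef]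
      have h2 : |α*s/2| ≤ s/2 := by
        rw [abs_div, abs_of_pos (by norm_num : (0:ℝ) < 2), abs_mul, abs_of_pos hs0]
        apply div_le_div_of_nonneg_right ?_ (by norm_num)
        calc |α| * s ≤ 1 * s := mul_le_mul_of_nonneg_right hα hs0.le
          _ = s := one_mul s
      exact Real.sinh_le_sinh.2 h2
    have h2 : Real.sinh (α*s/2)^2 ≤ x^2 := by
      have h3 := mul_le_mul habs habs (abs_nonneg _) hxpos.le
      have h4 := sq_abs (Real.sinh (α*s/2))
      linarith [h3, h4]
    have hx2 : 2*x^2 ≤ s^2 := by linarith [hxx, h42, h62]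
    rw [hcdef, h]
    linarith
  have hsa : |sa| ≤ 2*s := by
    rw [hsadef, Real.abs_sinh]
    have h1 : |α*s| ≤ s := by
      rw [abs_mul, abs_of_pos hs0]
      calc |α| * s ≤ 1 * s := mul_le_mul_of_nonneg_right hα hs0.le
        _ = s := one_mul s
    have h2 : Real.sinh |α*s| ≤ |α*s| + |α*s|^3 :=
      sinh_le_add_cube (abs_nonneg _) (by linarith)
    have ha0 := abs_nonneg (α*s)
    have ha1 : |α*s| ≤ 1 := le_trans h1 hs1
    have h4 : |α*s|^2 ≤ 1 := by linarith [mul_le_mul ha1 ha1 ha0 zero_le_one]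
    have h3 : |α*s|^3 ≤ |α*s| := by linarith [mul_le_mul_of_nonneg_right h4 ha0]
    linarith
  have hS_lb : s ≤ S := Real.self_le_sinh_iff.2 hs0.le
  have hS_ub : S ≤ s + s^3 := sinh_le_add_cube hs0.le hs1
  have hS_ub2 : S ≤ 2*s := by linarith
  clear_value x c sa S D1 D2 u
  have hb4 : b^2 ≤ 4 := by linarith [mul_le_mul hb2 hb2 hb0 (by norm_num : (0:ℝ) ≤ 2)]
  have hs2u : s^2 ≤ u := by rw [hudef]; linarith [sq_nonneg b]
  have hu5 : u ≤ 5 := by rw [hudef]; linarith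
  have hD1_lb : u/2 ≤ D1 := by
    rw [hD1def, hudef]
    linarith [mul_le_mul hx_lb hx_lb (by linarith) hxpos.le]
  have hD1_ub : D1 ≤ u := by
    rw [hD1def, hudef]
    linarith [hxx, h42, h62]
  have hD2_lb : u/2 ≤ D2 := by rw [hD2def, hudef]; linarith [sq_nonneg s]
  have hD2_ub : D2 ≤ u := by rw [hD2def, hudef]; linarith [sq_nonneg s]
  have hdiff0 : 0 ≤ D1 - D2 := by
    rw [hD1def, hD2def]
    linarith [mul_le_mul hx_lb hx_lb (by linarith) hxpos.le]
  have hdiff : D1 - D2 ≤ s^4 := by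
    rw [hD1def, hD2def]
    linarith [hxx, h64]
  clear hxx hx_ub hx_lb hA0 h62 h64 hs41
  constructor
  · -- k = 0
    have heq : c / D1 - 1 / D2 = (c * D2 - D1) / (D1 * D2) := by
      field_simp
    rw [heq, abs_div, abs_of_pos (mul_pos hD1pos hD2pos),
      div_le_div_iff₀ (mul_pos hD1pos hD2pos) hupos]
    have hNabs : |c * D2 - D1| ≤ s^2 * D2 + s^4 := by
      rw [abs_le]
      constructor
      · linarith [mul_le_mul_of_nonneg_right hc0 hD2pos.le, hdiff,
          mul_nonneg (sq_nonneg s) hD2pos.le]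
      · linarith [mul_le_mul_of_nonneg_right (show c - 1 ≤ s^2 by linarith) hD2pos.le,
          hdiff0]
    have h5u : (0:ℝ) ≤ 5 - u := by linarith
    have huu : (0:ℝ) ≤ u * u := mul_nonneg hupos.le hupos.le
    have e1 : s^2 * D2 * u ≤ u * u * 5 := by
      have h1 : s^2 * D2 ≤ u * u :=
        mul_le_mul hs2u hD2_ub hD2pos.le (by linarith)
      linarith [mul_le_mul_of_nonneg_right h1 hupos.le, mul_nonneg huu h5u]
    have e2 : s^4 * u ≤ u * u * 5 := by
      have h1 : s^4 ≤ u * u := by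
        linarith [mul_le_mul hs2u hs2u (sq_nonneg s) hupos.le]
      linarith [mul_le_mul_of_nonneg_right h1 hupos.le, mul_nonneg huu h5u]
    have e3 : u * u * 10 ≤ 1000 * (D1 * D2) := by
      linarith [mul_le_mul hD1_lb hD2_lb (by linarith : (0:ℝ) ≤ u/2) hD1pos.le]
    calc |c * D2 - D1| * u ≤ (s^2 * D2 + s^4) * u :=
          mul_le_mul_of_nonneg_right hNabs hupos.le
      _ = s^2 * D2 * u + s^4 * u := by ring
      _ ≤ 1000 * (D1 * D2) := by linarith
  · -- k = 1
    have h1' : 0 < 2*Real.sinh (s/2)^2 + b^2 := by rw [← hxdef, ← hD1def]; exact hD1pos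
    have h2' : 0 < s^2/2 + b^2 := by rw [← hD2def]; exact hD2pos
    have hderiv := (hasDeriv_main b α s h1' h2').deriv
    rw [hderiv]
    clear hderiv
    rw [← hxdef, ← hsadef, ← hSdef, ← hcdef, ← hD1def, ← hD2def]
    have heq : (α * sa * D1 - c * S) / D1^2 + s / D2^2
        = ((α * sa * D1 - c * S) * D2^2 + s * D1^2) / (D1^2 * D2^2) := by
      field_simp
    rw [heq, abs_div,
      abs_of_pos (mul_pos (pow_pos hD1pos 2) (pow_pos hD2pos 2)),
      div_le_div_iff₀ (mul_pos (pow_pos hD1pos 2) (pow_pos hD2pos 2)) hupos]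
    set N := (α * sa * D1 - c * S) * D2^2 + s * D1^2 with hNdef
    have hNid : N = α * sa * (D1 * D2^2) + s * ((D1 - D2) * (D1 + D2))
        - (S - s) * D2^2 - (c - 1) * (S * D2^2) := by
      rw [hNdef]; ring
    clear_value N
    clear hNdef
    have hDD2 : (0:ℝ) ≤ D1 * D2^2 := by positivity
    have hαsa : |α * sa| ≤ 2*s := by
      rw [abs_mul]
      calc |α| * |sa| ≤ 1 * |sa| := mul_le_mul_of_nonneg_right hα (abs_nonneg sa)
        _ = |sa| := one_mul _
        _ ≤ 2*s := hsa
    have hαsa' := abs_le.1 hαsa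
    have hA1u : α * sa * (D1 * D2^2) ≤ 2*s * (D1 * D2^2) :=
      mul_le_mul_of_nonneg_right hαsa'.2 hDD2
    have hA1l : -(2*s) * (D1 * D2^2) ≤ α * sa * (D1 * D2^2) :=
      mul_le_mul_of_nonneg_right hαsa'.1 hDD2
    have hA2u : s * ((D1 - D2) * (D1 + D2)) ≤ s^5 * (D1 + D2) := by
      have h1 : (D1 - D2) * (D1 + D2) ≤ s^4 * (D1 + D2) :=
        mul_le_mul_of_nonneg_right hdiff (by linarith)
      linarith [mul_le_mul_of_nonneg_left h1 hs0.le]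
    have hA2l : 0 ≤ s * ((D1 - D2) * (D1 + D2)) := by
      apply mul_nonneg hs0.le
      apply mul_nonneg hdiff0
      linarith
    have hA3u : (S - s) * D2^2 ≤ s^3 * D2^2 := by
      apply mul_le_mul_of_nonneg_right (by linarith) (sq_nonneg D2)
    have hA3l : 0 ≤ (S - s) * D2^2 :=
      mul_nonneg (by linarith) (sq_nonneg D2)
    have hA4u : (c - 1) * (S * D2^2) ≤ s^2 * (2*s * D2^2) := by
      have hS0 : 0 ≤ S := by linarith
      have h1 : (c-1) * (S * D2^2) ≤ s^2 * (S * D2^2) :=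
        mul_le_mul_of_nonneg_right (by linarith) (mul_nonneg hS0 (sq_nonneg D2))
      have h2 : s^2 * (S * D2^2) ≤ s^2 * (2*s * D2^2) := by
        apply mul_le_mul_of_nonneg_left ?_ (sq_nonneg s)
        exact mul_le_mul_of_nonneg_right hS_ub2 (sq_nonneg D2)
      linarith
    have hA4l : 0 ≤ (c - 1) * (S * D2^2) :=
      mul_nonneg (by linarith) (mul_nonneg (by linarith) (sq_nonneg D2))
    have hNabs : |N| ≤ 2*s*(D1*D2^2) + s^5*(D1+D2) + 3*(s^3*D2^2) := by
      rw [abs_le]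
      constructor
      · rw [hNid]
        have h5 : 0 ≤ s^5*(D1+D2) :=
          mul_nonneg (pow_nonneg hs0.le 5) (by linarith)
        linarith [hA1l, hA2l, hA3u, hA4u, h5]
      · rw [hNid]
        have h3 : 0 ≤ 3*(s^3*D2^2) := by
          have := mul_nonneg (pow_nonneg hs0.le 3) (sq_nonneg D2)
          linarith
        linarith [hA1u, hA2u, hA3l, hA4l, h3]
    have e1 : 2*s*(D1*D2^2)*u ≤ 4*(D1^2*D2^2) := by
      have h : 2*s*u ≤ 4*D1 := by
        linarith [mul_le_mul_of_nonneg_right hs1 hupos.le]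
      linarith [mul_le_mul_of_nonneg_right h hDD2]
    have hu2a : u^2 ≤ 4*D1^2 := by
      linarith [mul_le_mul (show u ≤ 2*D1 by linarith) (show u ≤ 2*D1 by linarith)
        hupos.le (by linarith : (0:ℝ) ≤ 2*D1)]
    have hs5 : s^5 ≤ u^2 := by
      have h1 : s^4 ≤ u^2 := by
        linarith [mul_le_mul hs2u hs2u (sq_nonneg s) hupos.le]
      linarith [mul_le_mul_of_nonneg_left hs1 (pow_nonneg hs0.le 4)]
    have e2 : s^5*(D1+D2)*u ≤ 32*(D1^2*D2^2) := by
      have h1 : s^5*(D1+D2) ≤ 2*u^3 := by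
        linarith [mul_le_mul hs5 (show D1+D2 ≤ 2*u by linarith)
          (by linarith) (sq_nonneg u)]
      have h2 : s^5*(D1+D2)*u ≤ 2*u^3*u :=
        mul_le_mul_of_nonneg_right h1 hupos.le
      have h3 : u^4 ≤ 16*(D1^2*D2^2) := by
        have hu2b : u^2 ≤ 4*D2^2 := by
          linarith [mul_le_mul (show u ≤ 2*D2 by linarith) (show u ≤ 2*D2 by linarith)
            hupos.le (by linarith : (0:ℝ) ≤ 2*D2)]
        linarith [mul_le_mul hu2a hu2b (sq_nonneg u) (by positivity : (0:ℝ) ≤ 4*D1^2)]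
      linarith [h2, h3]
    have e3 : 3*(s^3*D2^2)*u ≤ 12*(D1^2*D2^2) := by
      have hs3u : s^3*u ≤ u*u := by
        have h1 : s^3 ≤ u := by
          linarith [mul_le_mul_of_nonneg_right hs1 (sq_nonneg s), hs2u]
        linarith [mul_le_mul_of_nonneg_right h1 hupos.le]
      have h : 3*s^3*u ≤ 12*D1^2 := by linarith [hs3u, hu2a]
      linarith [mul_le_mul_of_nonneg_right h (sq_nonneg D2)]
    calc |N| * u ≤ (2*s*(D1*D2^2) + s^5*(D1+D2) + 3*(s^3*D2^2)) * u :=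
          mul_le_mul_of_nonneg_right hNabs hupos.le
      _ = 2*s*(D1*D2^2)*u + s^5*(D1+D2)*u + 3*(s^3*D2^2)*u := by ring
      _ ≤ 48*(D1^2*D2^2) := by linarith
      _ ≤ 1000*(D1^2*D2^2) := by
          linarith [mul_pos (pow_pos hD1pos 2) (pow_pos hD2pos 2)]
end

section
/- There exists a constant C > 0 such that for all s ∈ (0,1], all b ∈ [0,2], all α ∈ [−1,1], and k ∈ {0,1}: | ∂_s^k ( (e^{−s} − 1 + b²) sinh(αs) / (2 sinh²(s/2) + b²) − (−s + b²)(αs) / (s²/2 + b²) ) | ≤ C. -/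
open Real Set

lemma aux_exp_cubic {x : ℝ} (h0 : 0 ≤ x) (h1 : x ≤ 1) :
    |Real.exp x - (1 + x + x^2/2)| ≤ x^3/2 ∧ |Real.exp (-x) - (1 - x + x^2/2)| ≤ x^3/2 := by
  have hb := Real.exp_bound (x := x) (by rwa [abs_of_nonneg h0]) (n := 3) (by norm_num)
  have hb' := Real.exp_bound (x := -x) (by rwa [abs_neg, abs_of_nonneg h0]) (n := 3) (by norm_num)
  rw [abs_of_nonneg h0] at hb
  rw [abs_neg, abs_of_nonneg h0] at hb'
  simp only [Finset.sum_range_succ, Finset.sum_range_zero] at hb hb'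
  norm_num [Nat.factorial] at hb hb'
  constructor
  · refine hb.trans ?_
    nlinarith [pow_nonneg h0 3]
  · have : (1:ℝ) + -x + x^2/2 = 1 - x + x^2/2 := by ring
    rw [this] at hb'
    refine hb'.trans ?_
    nlinarith [pow_nonneg h0 3]

lemma aux_sinh_cosh {x : ℝ} (h0 : 0 ≤ x) (h1 : x ≤ 1) :
    x ≤ Real.sinh x ∧ Real.sinh x ≤ x + x^3/2 ∧ Real.cosh x ≤ 1 + x^2 := by
  obtain ⟨hp, hm⟩ := aux_exp_cubic h0 h1
  rw [abs_le] at hp hm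
  refine ⟨Real.self_le_sinh_iff.mpr h0, ?_, ?_⟩
  · rw [Real.sinh_eq]
    nlinarith [hp.2, hm.1, pow_nonneg h0 3]
  · rw [Real.cosh_eq]
    nlinarith [hp.2, hm.2, pow_nonneg h0 3, sq_nonneg x]

lemma abs_sub_le'' (a b : ℝ) : |a - b| ≤ |a| + |b| := by
  rw [sub_eq_add_neg]
  exact (abs_add_le _ _).trans (by rw [abs_neg])

set_option maxHeartbeats 2000000 in
/-- There is `C > 0` such that for all `s ∈ (0,1]`, `b ∈ [0,2]`, `α ∈ [-1,1]` and `k ∈ {0,1}`,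
`|∂_s^k ( (e^{-s} - 1 + b²) sinh(αs)/(2 sinh²(s/2) + b²) − (-s + b²)(αs)/(s²/2 + b²) )| ≤ C`. -/
theorem statement17 :
    ∃ C : ℝ, 0 < C ∧ ∀ s ∈ Set.Ioc (0:ℝ) 1, ∀ b ∈ Set.Icc (0:ℝ) 2,
      ∀ α ∈ Set.Icc (-1:ℝ) 1,
      |(Real.exp (-s) - 1 + b^2) * Real.sinh (α * s) / (2 * Real.sinh (s/2)^2 + b^2) -
          (-s + b^2) * (α * s) / (s^2/2 + b^2)| ≤ C ∧
      |deriv (fun t : ℝ =>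
            (Real.exp (-t) - 1 + b^2) * Real.sinh (α * t) / (2 * Real.sinh (t/2)^2 + b^2) -
              (-t + b^2) * (α * t) / (t^2/2 + b^2)) s| ≤ C := by
  refine ⟨200, by norm_num, ?_⟩
  rintro s ⟨hs0, hs1⟩ b ⟨hb0, hb2⟩ α ⟨hα1, hα2⟩
  -- basic abbreviations
  set es := Real.exp (-s) with hes_def
  set shA := Real.sinh (α * s) with hshA_def
  set chA := Real.cosh (α * s) with hchA_def
  set sh2 := Real.sinh (s/2) with hsh2_def
  set ch2 := Real.cosh (s/2) with hch2_def
  set q : ℝ := s^2/2 + b^2 with hq_def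
  set D : ℝ := 2 * sh2^2 + b^2 with hD_def
  set P : ℝ := 2 * sh2 * ch2 with hP_def
  clear_value es shA chA sh2 ch2 q D P
  -- basic positivity / range facts
  have hβ0 : (0:ℝ) ≤ b^2 := sq_nonneg b
  have hq : 0 < q := by rw [hq_def]; positivity
  have hsq : s^2/2 ≤ q := by rw [hq_def]; linarith only [hβ0]
  have hbq : b^2 ≤ q := by rw [hq_def]; nlinarith only [sq_nonneg s]
  have hq2 : 2*s^2*b^2 ≤ q^2 := by rw [hq_def]; nlinarith only [sq_nonneg (s^2/2 - b^2)]
  have ha0 : |α| ≤ 1 := abs_le.mpr ⟨hα1, hα2⟩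
  have haa : |α * s| ≤ s := by
    rw [abs_mul, abs_of_pos hs0]
    nlinarith only [mul_nonneg (sub_nonneg.2 ha0) hs0.le, abs_nonneg α]
  have haa0 : 0 ≤ |α * s| := abs_nonneg _
  -- sinh/cosh bounds
  obtain ⟨hS1, hS2, hS3⟩ := aux_sinh_cosh hs0.le hs1
  obtain ⟨hU1, hU2, hU3⟩ := aux_sinh_cosh (x := s/2) (by linarith) (by linarith)
  rw [← hsh2_def] at hU1 hU2
  obtain ⟨hV1, hV2, hV3⟩ := aux_sinh_cosh haa0 (haa.trans hs1)
  -- power chain facts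
  have hs2le1 : s^2 ≤ 1 := by nlinarith only [hs0.le, hs1]
  have h2s : s^2 ≤ s := by nlinarith only [mul_nonneg hs0.le (sub_nonneg.2 hs1)]
  have h3s : s^3 ≤ s^2 := by
    nlinarith only [mul_nonneg (mul_nonneg hs0.le hs0.le) (sub_nonneg.2 hs1)]
  have h4s : s^4 ≤ s^3 := by
    nlinarith only [mul_nonneg (mul_nonneg (mul_nonneg hs0.le hs0.le) hs0.le) (sub_nonneg.2 hs1)]
  have h5s : s^5 ≤ s^4 := by
    nlinarith only [mul_nonneg (mul_nonneg (mul_nonneg (mul_nonneg hs0.le hs0.le) hs0.le) hs0.le)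
      (sub_nonneg.2 hs1)]
  have h7s : s^7 ≤ s^6 := by
    nlinarith only [mul_nonneg (mul_nonneg (mul_nonneg (mul_nonneg (mul_nonneg
      (mul_nonneg hs0.le hs0.le) hs0.le) hs0.le) hs0.le) hs0.le) (sub_nonneg.2 hs1)]
  have hsinh_abs : |shA| = Real.sinh |α * s| := by rw [hshA_def]; exact Real.abs_sinh _
  have hpow3 : |α * s|^3 ≤ s^3 := pow_le_pow_left₀ haa0 haa 3
  have hs3s : s^3 ≤ s := by linarith only [h3s, h2s]
  have hBabs : |shA| ≤ 2*s := by
    rw [hsinh_abs]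
    linarith only [hV2, haa, hpow3, hs3s, hs0.le]
  have hH : |shA - α * s| ≤ s^3 := by
    have key : |shA - α * s| = Real.sinh |α * s| - |α * s| := by
      rw [hshA_def]
      rcases le_total 0 (α * s) with h | h
      · rw [abs_of_nonneg h, abs_of_nonneg (sub_nonneg.2 (Real.self_le_sinh_iff.2 h))]
      · rw [abs_of_nonpos h, abs_of_nonpos (sub_nonpos.2 (Real.sinh_le_self_iff.2 h)),
          Real.sinh_neg]
        ring
    rw [key]
    linarith only [hV2, hpow3, pow_nonneg hs0.le 3]
  have hchA1 : 1 ≤ chA := by rw [hchA_def]; exact Real.one_le_cosh _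
  have hchA : chA ≤ 1 + s^2 := by
    rw [hchA_def, ← Real.cosh_abs]
    linarith only [hV3, pow_le_pow_left₀ haa0 haa 2]
  have hH' : |α * chA - α| ≤ s^2 := by
    have h : α * chA - α = α * (chA - 1) := by ring
    rw [h, abs_mul, abs_of_nonneg (by linarith only [hchA1] : (0:ℝ) ≤ chA - 1)]
    nlinarith only [mul_nonneg (sub_nonneg.2 ha0) (sub_nonneg.2 hchA1), hchA, ha0, hchA1]
  have hsh20 : 0 ≤ sh2 := by linarith only [hU1, hs0.le]
  have hW0 : 0 ≤ D - q := by
    rw [hD_def, hq_def]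
    nlinarith only [mul_le_mul hU1 hU1 (by linarith only [hs0] : (0:ℝ) ≤ s/2) hsh20]
  have hW4 : D - q ≤ s^4 := by
    rw [hD_def, hq_def]
    have hm : sh2 * sh2 ≤ (s/2 + (s/2)^3/2) * (s/2 + (s/2)^3/2) :=
      mul_le_mul hU2 hU2 hsh20 (by linarith only [hU2, hsh20])
    nlinarith only [hm, h5s, h4s, h7s,
      mul_nonneg (mul_nonneg (mul_nonneg (mul_nonneg (mul_nonneg
        hs0.le hs0.le) hs0.le) hs0.le) hs0.le) (sub_nonneg.2 hs1)]
  have hDq : q ≤ D := by linarith only [hW0]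
  have hD0 : 0 < D := lt_of_lt_of_le hq hDq
  have hq2D : q^2 ≤ D^2 := by nlinarith only [mul_le_mul hDq hDq hq.le hD0.le]
  have hs4 : s^4 ≤ 2*q := by linarith only [h4s, h3s, h2s, hsq, hs1, hs0.le]
  have hD3 : D ≤ 3*q := by linarith only [hW4, hs4]
  have hPsinh : P = Real.sinh s := by
    rw [hP_def, hsh2_def, hch2_def, ← Real.sinh_two_mul]
    congr 1
    ring
  have hP0 : 0 ≤ P := by rw [hPsinh]; linarith only [hS1, hs0.le]
  have hP2 : P ≤ 2*s := by rw [hPsinh]; linarith only [hS2, hs3s, hs0.le]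
  have hWp : |P - s| ≤ s^3 := by
    rw [hPsinh, abs_of_nonneg (by linarith only [hS1] : (0:ℝ) ≤ Real.sinh s - s)]
    linarith only [hS2, pow_nonneg hs0.le 3]
  have hexp := (aux_exp_cubic hs0.le hs1).2
  rw [abs_le] at hexp
  have hg : |es - 1 + s| ≤ s^2 := by
    rw [hes_def, abs_le]
    constructor
    · linarith only [hexp.1, h3s, sq_nonneg s, pow_nonneg hs0.le 3]
    · linarith only [hexp.2, h3s]
  have hes1 : es ≤ 1 := by rw [hes_def]; exact Real.exp_le_one_iff.mpr (by linarith only [hs0])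
  have hes2 : 1 - s ≤ es := by
    rw [hes_def]
    linarith only [Real.add_one_le_exp (-s)]
  have hg' : |1 - es| ≤ s := by
    rw [abs_le]; constructor <;> linarith only [hes1, hes2, hs0.le]
  have hA : |(-s + b^2)| ≤ s + b^2 := by
    rw [abs_le]; constructor <;> linarith only [hs0.le, hβ0]
  constructor
  · have h1 : |(es - 1 + b^2) * shA / D| ≤ 6 := by
      rw [abs_div, abs_of_pos hD0, div_le_iff₀ hD0, abs_mul]
      have hAbs : |es - 1 + b^2| ≤ s + b^2 := by
        rw [abs_le]; constructor <;> linarith only [hes1, hes2, hs0.le, hβ0]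
      nlinarith only [mul_le_mul hAbs hBabs (abs_nonneg shA) (by positivity), hsq, hbq, hDq,
        mul_nonneg hβ0 (sub_nonneg.2 hs1)]
    have h2 : |(-s + b^2) * (α * s) / q| ≤ 3 := by
      rw [abs_div, abs_of_pos hq, div_le_iff₀ hq, abs_mul]
      nlinarith only [mul_le_mul hA haa haa0 (by positivity), hsq, hbq,
        mul_nonneg hβ0 (sub_nonneg.2 hs1)]
    calc |(es - 1 + b^2) * shA / D - (-s + b^2) * (α * s) / q|
        ≤ |(es - 1 + b^2) * shA / D| + |(-s + b^2) * (α * s) / q| := abs_sub_le'' _ _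
      _ ≤ 200 := by linarith only [h1, h2]
  · have hA' : HasDerivAt (fun t : ℝ => Real.exp (-t) - 1 + b^2) (-es) s := by
      have h := (Real.hasDerivAt_exp (-s)).comp s ((hasDerivAt_id s).neg)
      simpa [hes_def] using (h.sub_const 1).add_const (b^2)
    have hB' : HasDerivAt (fun t : ℝ => Real.sinh (α * t)) (chA * α) s := by
      have h := (Real.hasDerivAt_sinh (α * s)).comp s ((hasDerivAt_id s).const_mul α)
      rw [hchA_def]; exact h.congr_deriv (by ring)
    have hDD : HasDerivAt (fun t : ℝ => 2 * Real.sinh (t/2)^2 + b^2) P s := by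
      have h1 : HasDerivAt (fun t : ℝ => Real.sinh (t/2)) (ch2 * (1/2)) s := by
        have h := (Real.hasDerivAt_sinh (s/2)).comp s ((hasDerivAt_id s).div_const 2)
        rw [hch2_def]; exact h
      have h3 := ((h1.pow 2).const_mul 2).add_const (b^2)
      refine h3.congr_deriv ?_
      rw [hP_def, hsh2_def, hch2_def]
      ring
    have hN1 := hA'.mul hB'
    have hAv : HasDerivAt (fun t : ℝ => -t + b^2) (-1) s := by
      simpa using (hasDerivAt_id s).neg.add_const (b^2)
    have hBv : HasDerivAt (fun t : ℝ => α * t) α s := by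
      simpa using (hasDerivAt_id s).const_mul α
    have hN2 := hAv.mul hBv
    have hD2 : HasDerivAt (fun t : ℝ => t^2/2 + b^2) s s := by
      have h := ((hasDerivAt_pow 2 s).div_const 2).add_const (b^2)
      refine h.congr_deriv ?_
      ring
    have hD0raw : (0:ℝ) < 2 * Real.sinh (s/2)^2 + b^2 := by rw [← hsh2_def, ← hD_def]; exact hD0
    have hqraw : (0:ℝ) < s^2/2 + b^2 := by rw [← hq_def]; exact hq
    have hF := (hN1.div hDD hD0raw.ne').sub (hN2.div hD2 hqraw.ne')
    have hder : deriv (fun t : ℝ =>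
            (Real.exp (-t) - 1 + b^2) * Real.sinh (α * t) / (2 * Real.sinh (t/2)^2 + b^2) -
              (-t + b^2) * (α * t) / (t^2/2 + b^2)) s =
        ((-es * Real.sinh (α * s) + (Real.exp (-s) - 1 + b^2) * (chA * α)) *
              (2 * Real.sinh (s/2)^2 + b^2) -
            (Real.exp (-s) - 1 + b^2) * Real.sinh (α * s) * P) / (2 * Real.sinh (s/2)^2 + b^2)^2 -
          ((-1 * (α * s) + (-s + b^2) * α) * (s^2/2 + b^2) - (-s + b^2) * (α * s) * s) /
            (s^2/2 + b^2)^2 := hF.deriv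
    rw [hder, ← hes_def, ← hshA_def, ← hsh2_def, ← hD_def, ← hq_def]
    set E1 : ℝ := (((1 - es) * shA + (es - 1 + s) * (chA * α)) * D - (es - 1 + s) * shA * P) / D^2
      with hE1_def
    set E2 : ℝ := ((-(shA - α * s) + (-s + b^2) * (α * chA - α)) * D
        - (-s + b^2) * (shA - α * s) * P) / D^2 with hE2_def
    set E3 : ℝ := -(((-(α * s) * (D - q) + (-s + b^2) * α * (D - q)
          + (-s + b^2) * (α * s) * (P - s)) * (D * q)
        - (-s + b^2) * (α * s) * (D - q) * (P * q + D * s)) / (D * q)^2) with hE3_def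
    clear_value E1 E2 E3
    have hsplit : ((-es * shA + (es - 1 + b^2) * (chA * α)) * D - (es - 1 + b^2) * shA * P) / D^2 -
          ((-1 * (α * s) + (-s + b^2) * α) * q - (-s + b^2) * (α * s) * s) / q^2
        = E1 + E2 + E3 := by
      rw [hE1_def, hE2_def, hE3_def]
      field_simp
      ring
    rw [hsplit]
    have hbE1 : |E1| ≤ 50 := by
      rw [hE1_def, abs_div, abs_of_pos (by positivity : (0:ℝ) < D^2), div_le_iff₀ (by positivity)]
      have hchA0 : (0:ℝ) ≤ chA := by linarith only [hchA1]
      have hca : chA * |α| ≤ 2 := by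
        nlinarith only [mul_nonneg hchA0 (sub_nonneg.2 ha0), hchA, h2s, hs1]
      have h1 : |(1 - es) * shA + (es - 1 + s) * (chA * α)| ≤ 4*s^2 := by
        calc |(1 - es) * shA + (es - 1 + s) * (chA * α)|
            ≤ |(1 - es) * shA| + |(es - 1 + s) * (chA * α)| := abs_add_le _ _
          _ ≤ 4*s^2 := by
              rw [abs_mul, abs_mul, abs_mul, abs_of_nonneg hchA0]
              have m1 := mul_le_mul hg' hBabs (abs_nonneg shA) hs0.le
              have m2 := mul_le_mul hg hca (mul_nonneg hchA0 (abs_nonneg α))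
                (by positivity : (0:ℝ) ≤ s^2)
              linarith only [m1, m2]
      have h2 : |(es - 1 + s) * shA * P| ≤ 4*s^4 := by
        rw [abs_mul, abs_mul, abs_of_nonneg hP0]
        have hx : |es - 1 + s| * |shA| ≤ s^2 * (2*s) :=
          mul_le_mul hg hBabs (abs_nonneg shA) (by positivity)
        have hm := mul_le_mul hx hP2 hP0 (by positivity : (0:ℝ) ≤ s^2 * (2*s))
        nlinarith only [hm]
      calc |((1 - es) * shA + (es - 1 + s) * (chA * α)) * D - (es - 1 + s) * shA * P|
          ≤ |((1 - es) * shA + (es - 1 + s) * (chA * α)) * D| + |(es - 1 + s) * shA * P| :=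
            abs_sub_le'' _ _
        _ ≤ 4*s^2*D + 4*s^4 := by
            rw [abs_mul, abs_of_pos hD0]
            have hm := mul_le_mul_of_nonneg_right h1 hD0.le
            linarith only [hm, h2]
        _ ≤ 50 * D^2 := by
            have c1 : s^2 ≤ 2*D := by linarith only [hsq, hDq]
            have c2 : s^4 ≤ 4*D^2 := by
              nlinarith only [mul_le_mul c1 c1 (sq_nonneg s) (by linarith only [hD0] : (0:ℝ) ≤ 2*D)]
            have c3 : s^2*D ≤ 2*D^2 := by
              nlinarith only [mul_le_mul_of_nonneg_right c1 hD0.le]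
            linarith only [c2, c3, sq_nonneg D]
    have hbE2 : |E2| ≤ 50 := by
      rw [hE2_def, abs_div, abs_of_pos (by positivity : (0:ℝ) < D^2), div_le_iff₀ (by positivity)]
      have h1 : |(-(shA - α * s) + (-s + b^2) * (α * chA - α))| ≤ s^3 + (s + b^2)*s^2 := by
        calc |(-(shA - α * s) + (-s + b^2) * (α * chA - α))|
            ≤ |(-(shA - α * s))| + |(-s + b^2) * (α * chA - α)| := abs_add_le _ _
          _ ≤ s^3 + (s + b^2)*s^2 := by
              rw [abs_neg, abs_mul]
              have m := mul_le_mul hA hH' (abs_nonneg _) (by positivity : (0:ℝ) ≤ s + b^2)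
              linarith only [hH, m]
      have h2 : |(-s + b^2) * (shA - α * s) * P| ≤ (s + b^2)*s^3*(2*s) := by
        rw [abs_mul, abs_mul, abs_of_nonneg hP0]
        have hx : |(-s + b^2)| * |shA - α * s| ≤ (s + b^2)*s^3 :=
          mul_le_mul hA hH (abs_nonneg _) (by positivity)
        exact mul_le_mul hx hP2 hP0 (by positivity)
      calc |(-(shA - α * s) + (-s + b^2) * (α * chA - α)) * D - (-s + b^2) * (shA - α * s) * P|
          ≤ |(-(shA - α * s) + (-s + b^2) * (α * chA - α)) * D|
            + |(-s + b^2) * (shA - α * s) * P| := abs_sub_le'' _ _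
        _ ≤ (s^3 + (s + b^2)*s^2)*D + (s + b^2)*s^3*(2*s) := by
            rw [abs_mul, abs_of_pos hD0]
            have hm := mul_le_mul_of_nonneg_right h1 hD0.le
            linarith only [hm, h2]
        _ ≤ 50 * D^2 := by
            have c1 : s^2 ≤ 2*D := by linarith only [hsq, hDq]
            have c2 : s^3 ≤ 2*D := by linarith only [c1, h3s]
            have c3 : b^2*s^2 ≤ D := by
              nlinarith only [mul_nonneg hβ0 (sub_nonneg.2 hs2le1), hbq, hDq]
            have t1 : s^3*D ≤ 2*D^2 := by
              nlinarith only [mul_le_mul_of_nonneg_right c2 hD0.le]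
            have t2 : b^2*s^2*D ≤ D^2 := by
              nlinarith only [mul_le_mul_of_nonneg_right c3 hD0.le]
            have t3 : s^5 ≤ 4*D^2 := by
              nlinarith only [mul_le_mul c1 c1 (sq_nonneg s)
                (by linarith only [hD0] : (0:ℝ) ≤ 2*D), h5s]
            have t4 : 2*(b^2*s^4) ≤ D^2 := by
              nlinarith only [mul_nonneg (mul_nonneg hβ0 (sq_nonneg s)) (sub_nonneg.2 hs2le1),
                hq2, hq2D]
            nlinarith only [t1, t2, t3, t4, sq_nonneg D]
    have hbE3 : |E3| ≤ 100 := by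
      rw [hE3_def, abs_neg, abs_div, abs_of_pos (by positivity : (0:ℝ) < (D*q)^2),
        div_le_iff₀ (by positivity)]
      have h1 : |(-(α * s) * (D - q) + (-s + b^2) * α * (D - q)
            + (-s + b^2) * (α * s) * (P - s))| ≤ s^5 + (s + b^2)*s^4 + (s + b^2)*s^4 := by
        calc |(-(α * s) * (D - q) + (-s + b^2) * α * (D - q) + (-s + b^2) * (α * s) * (P - s))|
            ≤ |(-(α * s) * (D - q)) + (-s + b^2) * α * (D - q)|
              + |(-s + b^2) * (α * s) * (P - s)| := abs_add_le _ _
          _ ≤ |(-(α * s) * (D - q))| + |(-s + b^2) * α * (D - q)|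
              + |(-s + b^2) * (α * s) * (P - s)| := by
                have h := abs_add_le (-(α * s) * (D - q)) ((-s + b^2) * α * (D - q))
                linarith only [h]
          _ ≤ s^5 + (s + b^2)*s^4 + (s + b^2)*s^4 := by
              rw [abs_mul, abs_mul, abs_mul, abs_mul, abs_mul, abs_neg, abs_of_nonneg hW0]
              have e1 : |α * s| * (D - q) ≤ s * s^4 := mul_le_mul haa hW4 hW0 hs0.le
              have e2 : |(-s + b^2)| * |α| * (D - q) ≤ (s + b^2) * 1 * s^4 := by
                have h := mul_le_mul hA ha0 (abs_nonneg α) (by positivity : (0:ℝ) ≤ s + b^2)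
                exact mul_le_mul h hW4 hW0 (by positivity)
              have e3 : |(-s + b^2)| * |α * s| * |P - s| ≤ (s + b^2) * s * s^3 := by
                have h := mul_le_mul hA haa haa0 (by positivity : (0:ℝ) ≤ s + b^2)
                exact mul_le_mul h hWp (abs_nonneg _) (by positivity)
              nlinarith only [e1, e2, e3]
      have h2 : |(-s + b^2) * (α * s) * (D - q) * (P * q + D * s)| ≤ (s + b^2)*s*s^4*(5*s*q) := by
        rw [abs_mul, abs_mul, abs_mul, abs_of_nonneg hW0]
        have e1 : |(-s + b^2)| * |α * s| ≤ (s + b^2) * s := mul_le_mul hA haa haa0 (by positivity)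
        have e2 : |(-s + b^2)| * |α * s| * (D - q) ≤ (s + b^2) * s * s^4 :=
          mul_le_mul e1 hW4 hW0 (by positivity)
        have e3 : |P * q + D * s| ≤ 5*s*q := by
          rw [abs_of_nonneg (by positivity : (0:ℝ) ≤ P * q + D * s)]
          have m1 := mul_le_mul_of_nonneg_right hP2 hq.le
          have m2 := mul_le_mul_of_nonneg_right hD3 hs0.le
          linarith only [m1, m2]
        exact mul_le_mul e2 e3 (abs_nonneg _) (by positivity)
      calc |(-(α * s) * (D - q) + (-s + b^2) * α * (D - q)
              + (-s + b^2) * (α * s) * (P - s)) * (D * q)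
            - (-s + b^2) * (α * s) * (D - q) * (P * q + D * s)|
          ≤ |(-(α * s) * (D - q) + (-s + b^2) * α * (D - q)
              + (-s + b^2) * (α * s) * (P - s)) * (D * q)|
            + |(-s + b^2) * (α * s) * (D - q) * (P * q + D * s)| := abs_sub_le'' _ _
        _ ≤ (s^5 + (s + b^2)*s^4 + (s + b^2)*s^4) * (D * q) + (s + b^2)*s*s^4*(5*s*q) := by
            rw [abs_mul, abs_of_pos (by positivity : (0:ℝ) < D * q)]
            have hm := mul_le_mul_of_nonneg_right h1 (mul_pos hD0 hq).le
            linarith only [hm, h2]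
        _ ≤ 100 * (D * q)^2 := by
            have hb2s2 : b^2*s^2 ≤ q^2/2 := by linarith only [hq2]
            have hm2q : s^2 ≤ 2*q := by linarith only [hsq]
            have hs5 : s^5 ≤ 4*q^2 := by
              nlinarith only [mul_le_mul hm2q hm2q (sq_nonneg s)
                (by linarith only [hq] : (0:ℝ) ≤ 2*q), h5s]
            have ma : s^4 ≤ 4*q^2 := by
              nlinarith only [mul_le_mul hm2q hm2q (sq_nonneg s)
                (by linarith only [hq] : (0:ℝ) ≤ 2*q)]
            have mb : s^6 ≤ 8*q^3 := by
              nlinarith only [mul_le_mul ma hm2q (sq_nonneg s)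
                (by positivity : (0:ℝ) ≤ 4*q^2)]
            have hs7 : s^7 ≤ 8*q^3 := by linarith only [mb, h7s]
            have hq3D : D*q^3 ≤ D^2*q^2 := by
              nlinarith only [mul_nonneg (mul_nonneg hD0.le (sq_nonneg q)) (sub_nonneg.2 hDq)]
            have hq4D : q^4 ≤ D^2*q^2 := by
              nlinarith only [mul_nonneg (sq_nonneg q) (sub_nonneg.2 hq2D)]
            have t1 : 3*(s^5*(D*q)) ≤ 12*(D^2*q^2) := by
              nlinarith only [mul_le_mul_of_nonneg_right hs5 (mul_pos hD0 hq).le, hq3D]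
            have hb4 : b^2*s^4 ≤ q^2/2 := by
              nlinarith only [mul_nonneg (mul_nonneg hβ0 (sq_nonneg s)) (sub_nonneg.2 hs2le1),
                hb2s2]
            have t2 : 2*(b^2*s^4*(D*q)) ≤ D^2*q^2 := by
              nlinarith only [mul_le_mul_of_nonneg_right hb4 (mul_pos hD0 hq).le, hq3D]
            have t3 : 5*(s^7*q) ≤ 40*(D^2*q^2) := by
              nlinarith only [mul_le_mul_of_nonneg_right hs7 hq.le, hq4D]
            have hb6 : b^2*s^6 ≤ q^3 := by
              nlinarith only [mul_le_mul hb2s2 hs4 (by positivity : (0:ℝ) ≤ s^4)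
                (by positivity : (0:ℝ) ≤ q^2/2)]
            have t4 : 5*(b^2*s^6*q) ≤ 5*(D^2*q^2) := by
              nlinarith only [mul_le_mul_of_nonneg_right hb6 hq.le, hq4D]
            nlinarith only [t1, t2, t3, t4, mul_pos hD0 hq, sq_nonneg (D*q)]
    calc |E1 + E2 + E3| ≤ |E1| + |E2| + |E3| := by
          have h := abs_add_le (E1 + E2) E3
          have h2 := abs_add_le E1 E2
          linarith only [h, h2]
      _ ≤ 200 := by linarith only [hbE1, hbE2, hbE3]
end
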